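/- arXiv:0809.1135 — 4 statements merged into one kernel-verified Lean document; each statement's English description precedes it below -/
import Mathlib

section
/- In the stratified-sampling setup, assume Σ_j p_j σ_j > 0 and let Q*(μ) be the optimal allocation with q*_i = p_i σ_i / Σ_j p_j σ_j. Then for all positive integers M, I and every real ε > 1, |M ς²_{I,M}(μ,g,Q*(μ)) − Σ_{i∈{1,…,I}^m} p_i² σ_i² / q*_i| ≤ Var(φ(Y)) · ((1+ε) I^m / M + 1/(ε−1)), where Var(φ(Y)) = E[φ(Y)²] − (E[φ(Y)])² and by convention p_i²σ_i²/q*_i = 0 when q*_i = 0. -/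
open MeasureTheory Set Filter
open scoped ENNReal Topology

noncomputable section

namespace Strat

/-- Cumulative distribution function associated with a probability density `g` on `ℝ`. -/
def cdf (g : ℝ → ℝ) (x : ℝ) : ℝ := ∫ t in Iic x, g t

/-- Quantile function `G⁻¹(u) = inf {x ∈ {G > 0} : G x ≥ u}`, with values in `EReal`
(so that `inf ∅ = +∞`). -/
def qf (g : ℝ → ℝ) (u : ℝ) : EReal :=
  sInf {e : EReal | ∃ x : ℝ, e = (x : EReal) ∧ 0 < cdf g x ∧ u ≤ cdf g x}

/-- Index set `{1, …, I}^m` for the strata, carrying the lexicographic order. -/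
abbrev Idx (m I : ℕ) := Lex (Fin m → Fin I)

noncomputable instance {m I : ℕ} : LinearOrder (Idx m I) :=
  haveI h : WellFoundedLT (Fin m) := inferInstance
  @Pi.Lex.linearOrder (Fin m) (fun _ => Fin I) Fin.instLinearOrder h
    (fun _ => Fin.instLinearOrder)

instance {m I : ℕ} : Fintype (Idx m I) := inferInstanceAs (Fintype (Fin m → Fin I))

/-- The stratum `S_i = ∏_k (G_k⁻¹((i_k - 1)/I), G_k⁻¹(i_k/I)]`
(the value `j : Fin I` encodes `i_k = j + 1 ∈ {1, …, I}`). -/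
def stratum {m : ℕ} (g : Fin m → ℝ → ℝ) (I : ℕ) (i : Idx m I) : Set (Fin m → ℝ) :=
  {x | ∀ k : Fin m,
    qf (g k) (((ofLex i k : ℕ) : ℝ) / I) < (x k : EReal) ∧
      (x k : EReal) ≤ qf (g k) ((((ofLex i k : ℕ) : ℝ) + 1) / I)}

/-- Number of draws `M_i = ⌊M ∑_{j ≤ i} q_j⌋ - ⌊M ∑_{j < i} q_j⌋` allocated to stratum `i`. -/
def Mdraw {m I : ℕ} (q : Idx m I → ℝ) (M : ℕ) (i : Idx m I) : ℤ :=
  ⌊(M : ℝ) * ∑ j ∈ Finset.univ.filter (fun j => j ≤ i), q j⌋ -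
    ⌊(M : ℝ) * ∑ j ∈ @Finset.filter _ (fun j => j < i) (fun j => LinearOrder.toDecidableLT j i) Finset.univ, q j⌋

/-- The quantity `p_i² σ_i² = (∫_{S_i} f)(∫_{S_i} v f) - (∫_{S_i} ς f)²`. -/
def p2σ2 {m : ℕ} (f ς v : (Fin m → ℝ) → ℝ) (g : Fin m → ℝ → ℝ) (I : ℕ) (i : Idx m I) : ℝ :=
  (∫ x in stratum g I i, f x) * (∫ x in stratum g I i, v x * f x) -
    (∫ x in stratum g I i, ς x * f x) ^ 2

/-- Scaled variance `ς²_{I,M}(μ, g, Q) = ∑_{i : M_i > 0} M_i⁻¹ p_i² σ_i²` of the stratified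
estimator. -/
def stratVar {m : ℕ} (f ς v : (Fin m → ℝ) → ℝ) (g : Fin m → ℝ → ℝ) (I : ℕ)
    (q : Idx m I → ℝ) (M : ℕ) : ℝ :=
  ∑ i ∈ Finset.univ.filter (fun i => 0 < Mdraw q M i),
    ((Mdraw q M i : ℝ))⁻¹ * p2σ2 f ς v g I i

/-- The product density `g(x) = ∏_k g_k(x_k)` on `ℝ^m`. -/
def prodDens {m : ℕ} (g : Fin m → ℝ → ℝ) (x : Fin m → ℝ) : ℝ := ∏ k, g k (x k)

end Strat

/-!
Write `a_i = p_i² σ_i²`, `T = ∑ √a_i`, `q_i = √a_i / T`. Rounding the cumulative sums gives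
`|M_i - M q_i| < 1`, and the error of stratum `i` is `T² (M q_i² / M_i - q_i)`, or `-T² q_i` when
`M_i = 0`. It is at most `T² ε / M` when `M q_i ≤ ε` or `M_i = 0`, and at most `T² q_i / (ε - 1)`
otherwise, because then `M_i > M q_i - 1 > ε - 1`. Summing over the `I^m` strata with `∑ q_i = 1`
bounds the total error by `T² (ε I^m / M + 1 / (ε - 1))`.

It remains to see `T² ≤ Var φ(Y)`. On `A_i = {μᵀY ∈ S_i}` put `P_i = P(A_i)`,
`C_i = E[φ(Y); A_i]` and `V_i = E[φ(Y)²; A_i]`; the densities give `a_i ≤ P_i V_i - C_i²`.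
Adding the complement of the `A_i` to get a partition of `Ω`, Cauchy–Schwarz applied twice gives
`(∑ √(P_i V_i - C_i²))² ≤ (∑ P_i)(∑ V_i) - (∑ C_i)² = E[φ(Y)²] - E[φ(Y)]²`.
-/

open Function

theorem Int.abs_floor_add_sub_floor_sub_lt_one {α : Type*} [Field α] [LinearOrder α]
    [IsStrictOrderedRing α] [FloorRing α] (x y : α) :
    |((⌊x + y⌋ - ⌊x⌋ : ℤ) : α) - y| < 1 := by
  rw [abs_sub_lt_iff]
  push_cast
  constructor <;> linarith [Int.floor_le (x + y), Int.lt_floor_add_one (x + y), Int.floor_le x,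
    Int.lt_floor_add_one x]

theorem Finset.sum_filter_le_eq_sum_filter_lt_add {α M : Type*} [LinearOrder α] [Fintype α]
    [AddCommMonoid M] (f : α → M) (i : α) [DecidablePred (· ≤ i)] [DecidablePred (· < i)] :
    ∑ j ∈ univ.filter (· ≤ i), f j = ∑ j ∈ univ.filter (· < i), f j + f i := by
  classical
  rw [Finset.sum_filter, Finset.sum_filter, ← Fintype.sum_ite_eq' i f, ← Finset.sum_add_distrib]
  refine Finset.sum_congr rfl fun j _ => ?_
  rcases lt_trichotomy j i with h | rfl | h
  · simp [h, h.le, h.ne]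
  · simp
  · simp [h.not_ge, h.not_gt, h.ne']

theorem abs_ite_mul_sq_div_sub_le {M ε q : ℝ} {N : ℤ} (hM : 0 < M) (hε : 1 < ε) (hq : 0 ≤ q)
    (hNq : |N - M * q| < 1) :
    |(if 0 < N then M * q ^ 2 / N else 0) - q| ≤ ε / M + q / (ε - 1) := by
  obtain ⟨hNlt, hltN⟩ := abs_sub_lt_iff.mp hNq
  split_ifs with hN
  · have hN1 : (1 : ℝ) ≤ N := by exact_mod_cast hN
    have hN0 : (0 : ℝ) < N := by linarith
    have h_le_div : |M * q ^ 2 / N - q| ≤ q / N := by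
      rw [show M * q ^ 2 / N - q = q * (M * q - N) / N by field_simp, abs_div, abs_mul,
        abs_of_nonneg hq, abs_of_pos hN0]
      gcongr
      exact mul_le_of_le_one_right hq (abs_sub_lt_iff.mpr ⟨hltN, hNlt⟩).le
    rcases le_or_gt (M * q) ε with hsmall | hlarge
    · have : q ≤ ε / M := by rw [le_div_iff₀ hM]; linarith
      calc _ ≤ q / N := h_le_div
        _ ≤ q := div_le_self hq hN1
        _ ≤ ε / M + q / (ε - 1) := le_add_of_le_of_nonneg this (by bound)
    · calc _ ≤ q / N := h_le_div
        _ ≤ q / (ε - 1) := div_le_div_of_nonneg_left hq (by linarith) (by linarith)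
        _ ≤ ε / M + q / (ε - 1) := le_add_of_nonneg_left (by positivity)
  · have hN0 : (N : ℝ) ≤ 0 := by exact_mod_cast not_lt.mp hN
    have : q ≤ ε / M := by rw [le_div_iff₀ hM]; nlinarith
    rw [zero_sub, abs_neg, abs_of_nonneg hq]
    exact le_add_of_le_of_nonneg this (by bound)

theorem abs_sum_ite_mul_sq_div_sub_le {ι : Type*} [Fintype ι] {M ε : ℝ} {q : ι → ℝ}
    {N : ι → ℤ} (hM : 0 < M) (hε : 1 < ε) (hq : ∀ i, 0 ≤ q i) (hq1 : ∑ i, q i = 1)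
    (hNq : ∀ i, |N i - M * q i| < 1) :
    |∑ i, ((if 0 < N i then M * q i ^ 2 / N i else 0) - q i)| ≤
      ε * Fintype.card ι / M + 1 / (ε - 1) := by
  calc _ ≤ ∑ i, |(if 0 < N i then M * q i ^ 2 / N i else 0) - q i| :=
        Finset.abs_sum_le_sum_abs _ _
    _ ≤ ∑ i, (ε / M + q i / (ε - 1)) :=
        Finset.sum_le_sum fun i _ => abs_ite_mul_sq_div_sub_le hM hε (hq i) (hNq i)
    _ = ε * Fintype.card ι / M + 1 / (ε - 1) := by
        rw [Finset.sum_add_distrib, ← Finset.sum_div _ q, hq1, Finset.sum_const,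
          Finset.card_univ, nsmul_eq_mul]
        ring

theorem abs_mul_sum_inv_mul_sub_sum_div_le {ι : Type*} [Fintype ι] {M ε : ℝ} (a : ι → ℝ)
    (N : ι → ℤ) (hM : 0 < M) (hε : 1 < ε) (hT : 0 < ∑ j, √(a j))
    (hN : ∀ i, |N i - M * (√(a i) / ∑ j, √(a j))| < 1) :
    |M * ∑ i ∈ Finset.univ.filter (fun i => 0 < N i), (N i : ℝ)⁻¹ * a i -
        ∑ i, a i / (√(a i) / ∑ j, √(a j))| ≤
      (∑ j, √(a j)) ^ 2 * (ε * Fintype.card ι / M + 1 / (ε - 1)) := by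
  set T := ∑ j, √(a j)
  set q : ι → ℝ := fun i => √(a i) / T
  have hq : ∀ i, 0 ≤ q i := fun i => by positivity
  have hq1 : ∑ i, q i = 1 := by rw [← Finset.sum_div, div_self hT.ne']
  -- This also holds when `a i ≤ 0`: then `q i = 0` and `a i / q i = 0` since `x / 0 = 0`.
  have hdiv : ∀ i, a i / q i = T ^ 2 * q i := fun i => by
    rcases lt_or_ge 0 (a i) with ha | ha
    · have hs : √(a i) ≠ 0 := (Real.sqrt_pos.mpr ha).ne'
      calc a i / q i = √(a i) ^ 2 / q i := by rw [Real.sq_sqrt ha.le]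
        _ = T ^ 2 * q i := by simp only [q]; field_simp
    · simp [q, Real.sqrt_eq_zero'.mpr ha]
  have hterm : ∀ i, M * (if 0 < N i then (N i : ℝ)⁻¹ * a i else 0) - a i / q i =
      T ^ 2 * ((if 0 < N i then M * q i ^ 2 / N i else 0) - q i) := fun i => by
    rw [hdiv]
    split_ifs with hNi
    · have hqi : 0 < q i := by
        have h1 : (1 : ℝ) ≤ N i := by exact_mod_cast hNi
        have h2 := (abs_lt.mp (hN i)).2
        exact pos_of_mul_pos_right (by linarith : 0 < M * q i) hM.le
      have hs : 0 < √(a i) := (div_pos_iff_of_pos_right hT).mp hqi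
      have ha : a i = (T * q i) ^ 2 := by
        simp only [q]
        rw [mul_div_cancel₀ _ hT.ne', Real.sq_sqrt (Real.sqrt_pos.mp hs).le]
      rw [ha]
      field_simp
    · ring
  calc _ = |T ^ 2 * ∑ i, ((if 0 < N i then M * q i ^ 2 / N i else 0) - q i)| := by
        rw [Finset.sum_filter, Finset.mul_sum, ← Finset.sum_sub_distrib, Finset.mul_sum]
        exact congrArg abs (Finset.sum_congr rfl fun i _ => hterm i)
    _ ≤ T ^ 2 * (ε * Fintype.card ι / M + 1 / (ε - 1)) := by
        rw [abs_mul, abs_of_nonneg (sq_nonneg T)]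
        exact mul_le_mul_of_nonneg_left (abs_sum_ite_mul_sq_div_sub_le hM hε hq hq1 hN)
          (sq_nonneg T)

theorem sq_sum_sqrt_mul_sub_sq_le {ι : Type*} (s : Finset ι) {P V C : ι → ℝ}
    (hP : ∀ i ∈ s, 0 ≤ P i) (hV : ∀ i ∈ s, 0 ≤ V i) (hC : ∀ i ∈ s, C i ^ 2 ≤ P i * V i) :
    (∑ i ∈ s, √(P i * V i - C i ^ 2)) ^ 2 ≤
      (∑ i ∈ s, P i) * (∑ i ∈ s, V i) - (∑ i ∈ s, C i) ^ 2 := by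
  have hPC : ∀ i ∈ s, P i * (C i ^ 2 / P i) = C i ^ 2 := fun i hi => by
    rcases (hP i hi).eq_or_lt with h0 | hpos
    · have := hC i hi
      rw [← h0, zero_mul] at this ⊢
      linarith [sq_nonneg (C i)]
    · exact mul_div_cancel₀ _ hpos.ne'
  have hCP : ∀ i ∈ s, 0 ≤ C i ^ 2 / P i := fun i hi => div_nonneg (sq_nonneg _) (hP i hi)
  have hw : ∀ i ∈ s, 0 ≤ V i - C i ^ 2 / P i := fun i hi => by
    rcases (hP i hi).eq_or_lt with h0 | hpos
    · simpa [← h0] using hV i hi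
    · rw [sub_nonneg, div_le_iff₀ hpos, mul_comm]
      exact hC i hi
  -- Cauchy–Schwarz twice, with `V i = (V i - C i ^ 2 / P i) + C i ^ 2 / P i`.
  have hsqrt := Finset.sum_sq_le_sum_mul_sum_of_sq_le_mul s hP hw fun i hi => by
    rw [Real.sq_sqrt (sub_nonneg.mpr (hC i hi)), mul_sub, hPC i hi]
  have hsum := Finset.sum_sq_le_sum_mul_sum_of_sq_le_mul s hP hCP fun i hi => (hPC i hi).ge
  rw [Finset.sum_sub_distrib, mul_sub] at hsqrt
  linarith

theorem sq_integral_le_measureReal_univ_mul_integral_sq {Ω : Type*} [MeasurableSpace Ω]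
    (ν : Measure Ω) [IsFiniteMeasure ν] {X : Ω → ℝ} (hX : Integrable X ν)
    (hX2 : Integrable (fun ω => X ω ^ 2) ν) :
    (∫ ω, X ω ∂ν) ^ 2 ≤ ν.real univ * ∫ ω, X ω ^ 2 ∂ν := by
  have hquad : ∀ c : ℝ,
      0 ≤ ν.real univ * (c * c) + (-2 * ∫ ω, X ω ∂ν) * c + ∫ ω, X ω ^ 2 ∂ν := fun c => by
    have hexp : (fun ω => (X ω - c) ^ 2) = fun ω => X ω ^ 2 - 2 * c * X ω + c * c := by
      ext; ring
    have h : 0 ≤ ∫ ω, (X ω - c) ^ 2 ∂ν := integral_nonneg fun ω => sq_nonneg _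
    have hint : Integrable (fun ω => X ω ^ 2 - 2 * c * X ω) ν := hX2.sub (hX.const_mul _)
    rw [hexp, integral_add hint (integrable_const _),
      integral_sub hX2 (hX.const_mul _), integral_const_mul, integral_const, smul_eq_mul] at h
    linarith
  have := discrim_le_zero hquad
  rw [discrim] at this
  linarith

theorem integral_le_toReal_lintegral_ofReal {α : Type*} [MeasurableSpace α] {μ : Measure α}
    (f : α → ℝ) : ∫ x, f x ∂μ ≤ (∫⁻ x, ENNReal.ofReal (f x) ∂μ).toReal := by
  by_cases hf : Integrable f μ
  · rw [integral_eq_lintegral_pos_part_sub_lintegral_neg_part hf]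
    exact sub_le_self _ ENNReal.toReal_nonneg
  · rw [integral_undef hf]
    exact ENNReal.toReal_nonneg

theorem setIntegral_compl_iUnion_add_sum {α ι E : Type*} [MeasurableSpace α] [Fintype ι]
    [NormedAddCommGroup E] [NormedSpace ℝ E] {μ : Measure α} {A : ι → Set α}
    (hA : ∀ i, MeasurableSet (A i)) (hAd : Pairwise (Disjoint on A)) {Y : α → E}
    (hY : Integrable Y μ) :
    ∫ x in (⋃ i, A i)ᶜ, Y x ∂μ + ∑ i, ∫ x in A i, Y x ∂μ = ∫ x, Y x ∂μ := by
  rw [← integral_iUnion_fintype hA hAd fun i => hY.integrableOn, add_comm]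
  exact integral_add_compl (MeasurableSet.iUnion hA) hY

theorem sq_sum_sqrt_le_integral_sq_sub_sq_integral {Ω ι : Type*} [MeasurableSpace Ω]
    [Fintype ι] (P : Measure Ω) [IsProbabilityMeasure P] {X : Ω → ℝ} (hX : Integrable X P)
    (hX2 : Integrable (fun ω => X ω ^ 2) P) {A : ι → Set Ω} (hA : ∀ i, MeasurableSet (A i))
    (hAd : Pairwise (Disjoint on A)) :
    (∑ i, √(P.real (A i) * (∫ ω in A i, X ω ^ 2 ∂P) - (∫ ω in A i, X ω ∂P) ^ 2)) ^ 2 ≤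
      (∫ ω, X ω ^ 2 ∂P) - (∫ ω, X ω ∂P) ^ 2 := by
  -- `B none` is the complement of the strata, so that `B` partitions `Ω`.
  set B : Option ι → Set Ω := fun o => o.elim (⋃ i, A i)ᶜ A
  have hB : ∀ o, MeasurableSet (B o) := by
    rintro (_ | i)
    exacts [(MeasurableSet.iUnion hA).compl, hA i]
  have hpart := sq_sum_sqrt_mul_sub_sq_le Finset.univ (P := fun o => P.real (B o))
    (V := fun o => ∫ ω in B o, X ω ^ 2 ∂P) (C := fun o => ∫ ω in B o, X ω ∂P)
    (fun _ _ => measureReal_nonneg) (fun _ _ => integral_nonneg fun _ => sq_nonneg _)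
    fun o _ => by
      simpa using sq_integral_le_measureReal_univ_mul_integral_sq (P.restrict (B o))
        hX.integrableOn hX2.integrableOn
  have hmass : P.real (⋃ i, A i)ᶜ + ∑ i, P.real (A i) = 1 := by
    simpa using setIntegral_compl_iUnion_add_sum hA hAd (integrable_const (1 : ℝ)) (μ := P)
  simp only [Fintype.sum_option, B, Option.elim, hmass, one_mul,
    setIntegral_compl_iUnion_add_sum hA hAd hX,
    setIntegral_compl_iUnion_add_sum hA hAd hX2] at hpart
  refine le_trans ?_ hpart
  gcongr
  exact le_add_of_nonneg_left (Real.sqrt_nonneg _)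

theorem sq_sum_sqrt_le_of_density {Ω β ι : Type*} [MeasurableSpace Ω] [MeasurableSpace β]
    [Fintype ι] (P : Measure Ω) [IsProbabilityMeasure P] (ν : Measure β) {Z : Ω → β}
    (hZ : Measurable Z) {X : Ω → ℝ} (hX : Integrable X P)
    (hX2 : Integrable (fun ω => X ω ^ 2) P) {f ς v : β → ℝ} {S : ι → Set β}
    (hS : ∀ i, MeasurableSet (S i)) (hSd : Pairwise (Disjoint on S))
    (hdens : ∀ i, P (Z ⁻¹' S i) = ∫⁻ x in S i, ENNReal.ofReal (f x) ∂ν)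
    (hςf : ∀ i, ∫ x in S i, ς x * f x ∂ν = ∫ ω in Z ⁻¹' S i, X ω ∂P)
    (hvf : ∀ i, ∫ x in S i, v x * f x ∂ν = ∫ ω in Z ⁻¹' S i, X ω ^ 2 ∂P) :
    (∑ i, √((∫ x in S i, f x ∂ν) * (∫ x in S i, v x * f x ∂ν) -
        (∫ x in S i, ς x * f x ∂ν) ^ 2)) ^ 2 ≤ (∫ ω, X ω ^ 2 ∂P) - (∫ ω, X ω ∂P) ^ 2 := by
  refine le_trans ?_ (sq_sum_sqrt_le_integral_sq_sub_sq_integral P hX hX2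
    (fun i => hZ (hS i)) fun i j hij => (hSd hij).preimage Z)
  simp only [hςf, hvf]
  gcongr with i
  rw [measureReal_def, hdens i]
  exact integral_le_toReal_lintegral_ofReal f

namespace Strat

theorem qf_mono (g : ℝ → ℝ) {u u' : ℝ} (h : u ≤ u') : qf g u ≤ qf g u' :=
  sInf_le_sInf fun _ ⟨x, hx, hpos, hu'⟩ => ⟨x, hx, hpos, h.trans hu'⟩

theorem measurableSet_stratum {m : ℕ} (g : Fin m → ℝ → ℝ) (I : ℕ) (i : Idx m I) :
    MeasurableSet (stratum g I i) := by
  have : stratum g I i = ⋂ k, (fun x : Fin m → ℝ => x k) ⁻¹' (((↑) : ℝ → EReal) ⁻¹'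
      Ioc (qf (g k) ((ofLex i k : ℕ) / I)) (qf (g k) (((ofLex i k : ℕ) + 1) / I))) := by
    ext x
    simp [stratum]
  rw [this]
  exact MeasurableSet.iInter fun k =>
    measurable_pi_apply k (measurable_coe_real_ereal measurableSet_Ioc)

theorem pairwise_disjoint_stratum {m : ℕ} (g : Fin m → ℝ → ℝ) (I : ℕ) :
    Pairwise (Disjoint on (stratum g I)) := by
  -- Strata whose indices differ in coordinate `k` are separated by a quantile of `g k`.
  have key : ∀ (i j : Idx m I) (k : Fin m), ofLex i k < ofLex j k →
      Disjoint (stratum g I i) (stratum g I j) := by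
    intro i j k hlt
    refine Set.disjoint_left.mpr fun x hxi hxj =>
      (hxj k).1.not_ge ((hxi k).2.trans (qf_mono _ ?_))
    gcongr
    exact_mod_cast Nat.succ_le_of_lt hlt
  intro i j hij
  obtain ⟨k, hk⟩ : ∃ k : Fin m, ofLex i k ≠ ofLex j k := by
    by_contra! h
    exact hij (ofLex.injective (funext h))
  rcases hk.lt_or_gt with h | h
  exacts [key i j k h, (key j i k h).symm]

theorem abs_Mdraw_sub_lt_one {m I : ℕ} (q : Idx m I → ℝ) (M : ℕ) (i : Idx m I) :
    |(Mdraw q M i : ℝ) - M * q i| < 1 := by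
  rw [Mdraw, Finset.sum_filter_le_eq_sum_filter_lt_add, mul_add]
  exact Int.abs_floor_add_sub_floor_sub_lt_one _ _

theorem card_Idx (m I : ℕ) : Fintype.card (Idx m I) = I ^ m := by
  show Fintype.card (Fin m → Fin I) = I ^ m
  simp

end Strat

theorem stratified_variance_floor_bound_optimal_allocation_general
    {d m : ℕ}
    {Ω : Type*} [MeasurableSpace Ω] (P : Measure Ω) [IsProbabilityMeasure P]
    (Y : Ω → Fin d → ℝ) (hY : Measurable Y)
    (φ : (Fin d → ℝ) → ℝ) (hφ : Measurable φ)
    (hφsq : Integrable (fun ω => φ (Y ω) ^ 2) P)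
    (μ : Matrix (Fin d) (Fin m) ℝ)
    (f ς v : (Fin m → ℝ) → ℝ)
    (hdens : ∀ S : Set (Fin m → ℝ), MeasurableSet S →
      P {ω | (fun k => ∑ j, μ j k * Y ω j) ∈ S} = ∫⁻ x in S, ENNReal.ofReal (f x))
    (hςf : ∀ S : Set (Fin m → ℝ), MeasurableSet S →
      ∫ x in S, ς x * f x = ∫ ω in {ω | (fun k => ∑ j, μ j k * Y ω j) ∈ S}, φ (Y ω) ∂P)
    (hvf : ∀ S : Set (Fin m → ℝ), MeasurableSet S →
      ∫ x in S, v x * f x = ∫ ω in {ω | (fun k => ∑ j, μ j k * Y ω j) ∈ S}, φ (Y ω) ^ 2 ∂P)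
    (g : Fin m → ℝ → ℝ)
    (I M : ℕ) (hM : 0 < M)
    (hpos : 0 < ∑ j : Strat.Idx m I, Real.sqrt (Strat.p2σ2 f ς v g I j))
    (ε : ℝ) (hε : 1 < ε) :
    |(M : ℝ) * Strat.stratVar f ς v g I
          (fun i => Real.sqrt (Strat.p2σ2 f ς v g I i) /
            ∑ j, Real.sqrt (Strat.p2σ2 f ς v g I j)) M -
        ∑ i, Strat.p2σ2 f ς v g I i /
          (Real.sqrt (Strat.p2σ2 f ς v g I i) / ∑ j, Real.sqrt (Strat.p2σ2 f ς v g I j))| ≤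
      ((∫ ω, φ (Y ω) ^ 2 ∂P) - (∫ ω, φ (Y ω) ∂P) ^ 2) * ((1 + ε) * (I : ℝ) ^ m / (M : ℝ) + 1 / (ε - 1)) := by
  have hZ : Measurable fun ω k => ∑ j, μ j k * Y ω j := by fun_prop
  have hφY : Integrable (fun ω => φ (Y ω)) P :=
    ((memLp_two_iff_integrable_sq (hφ.comp hY).aestronglyMeasurable).2 hφsq).integrable one_le_two
  have hS := Strat.measurableSet_stratum g I
  have hvar : (∑ j, √(Strat.p2σ2 f ς v g I j)) ^ 2 ≤
      (∫ ω, φ (Y ω) ^ 2 ∂P) - (∫ ω, φ (Y ω) ∂P) ^ 2 :=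
    sq_sum_sqrt_le_of_density P volume hZ hφY hφsq hS (Strat.pairwise_disjoint_stratum g I)
      (fun i => hdens _ (hS i)) (fun i => hςf _ (hS i)) (fun i => hvf _ (hS i))
  calc _ ≤ (∑ j, √(Strat.p2σ2 f ς v g I j)) ^ 2 *
        (ε * Fintype.card (Strat.Idx m I) / M + 1 / (ε - 1)) :=
      abs_mul_sum_inv_mul_sub_sum_div_le _ _ (by exact_mod_cast hM) hε hpos
        fun i => Strat.abs_Mdraw_sub_lt_one _ M i
    _ ≤ _ := by
      rw [Strat.card_Idx, Nat.cast_pow]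
      gcongr
      · exact (sq_nonneg _).trans hvar
      · linarith

/-- Lemma 6.1(iii) of Etoré–Fort–Jourdain–Moulines, "On adaptive stratification":
bound for the optimal allocation `q*_i = p_i σ_i / ∑_j p_j σ_j`. -/
theorem stratified_variance_floor_bound_optimal_allocation
    {d m : ℕ} (hm : m < d)
    {Ω : Type*} [MeasurableSpace Ω] (P : Measure Ω) [IsProbabilityMeasure P]
    (Y : Ω → Fin d → ℝ) (hY : Measurable Y)
    (φ : (Fin d → ℝ) → ℝ) (hφ : Measurable φ)
    (hφsq : Integrable (fun ω => φ (Y ω) ^ 2) P)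
    (μ : Matrix (Fin d) (Fin m) ℝ) (hμ : μ.transpose * μ = 1)
    (f ς v : (Fin m → ℝ) → ℝ)
    (hf : Measurable f) (hς : Measurable ς) (hv : Measurable v)
    (hdens : ∀ S : Set (Fin m → ℝ), MeasurableSet S →
      P {ω | (fun k => ∑ j, μ j k * Y ω j) ∈ S} = ∫⁻ x in S, ENNReal.ofReal (f x))
    (hςf : ∀ S : Set (Fin m → ℝ), MeasurableSet S →
      ∫ x in S, ς x * f x = ∫ ω in {ω | (fun k => ∑ j, μ j k * Y ω j) ∈ S}, φ (Y ω) ∂P)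
    (hvf : ∀ S : Set (Fin m → ℝ), MeasurableSet S →
      ∫ x in S, v x * f x = ∫ ω in {ω | (fun k => ∑ j, μ j k * Y ω j) ∈ S}, φ (Y ω) ^ 2 ∂P)
    (g : Fin m → ℝ → ℝ) (hgm : ∀ k, Measurable (g k)) (hg0 : ∀ k x, 0 ≤ g k x)
    (hg1 : ∀ k, ∫ x, g k x = 1)
    (I M : ℕ) (hI : 0 < I) (hM : 0 < M)
    (hpos : 0 < ∑ j : Strat.Idx m I, Real.sqrt (Strat.p2σ2 f ς v g I j))
    (ε : ℝ) (hε : 1 < ε) :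
    |(M : ℝ) * Strat.stratVar f ς v g I
          (fun i => Real.sqrt (Strat.p2σ2 f ς v g I i) /
            ∑ j, Real.sqrt (Strat.p2σ2 f ς v g I j)) M -
        ∑ i, Strat.p2σ2 f ς v g I i /
          (Real.sqrt (Strat.p2σ2 f ς v g I i) / ∑ j, Real.sqrt (Strat.p2σ2 f ς v g I j))| ≤
      ((∫ ω, φ (Y ω) ^ 2 ∂P) - (∫ ω, φ (Y ω) ∂P) ^ 2) * ((1 + ε) * (I : ℝ) ^ m / (M : ℝ) + 1 / (ε - 1)) :=
  stratified_variance_floor_bound_optimal_allocation_general P Y hY φ hφ hφsq μ f ς v hdens hςf hvf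
    g I M hM hpos ε hε

end
end

section
/- Let h̃ : ℝ^m → ℝ be square integrable and vanish outside [0,1]^m. For a positive integer I and i = (i_1,…,i_m) ∈ {1,…,I}^m set J_i = ∏_{k=1}^m [(i_k−1)/I, i_k/I]. Then each term ∫_{J_i} h̃² dλ − I^m (∫_{J_i} h̃ dλ)² is nonnegative, and Σ_{i∈{1,…,I}^m} (∫_{J_i} h̃² dλ − I^m (∫_{J_i} h̃ dλ)²) ≤ (1/2) ∫_{[0,1]^m} ∫_{[−1,1]^m} (h̃(u) − h̃(u + z/I))² dz du; consequently the sum tends to 0 as I → ∞. -/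
/-!
Each term equals `I^m / 2 · ∫_J ∫_J (h u - h v)² dv du` (the variance identity, `|J| = I^{-m}`).
For `u ∈ J` the cube `J` lies inside `u + [-1,1]^m / I`, so the substitution `v = u + z / I`
bounds `I^m ∫_J (h u - h v)² dv` by `∫_{[-1,1]^m} (h u - h (u + z / I))² dz`; summing over the
a.e. disjoint cubes gives the bound. By Fubini the bound is an integral over `z` of
`∫_{[0,1]^m} (h u - h (u + z / I))² du ≤ ‖h - h(· + z / I)‖²_{L²}`, which tends to `0` by
continuity of translation in `L²`; dominated convergence finishes the proof.
-/

open MeasureTheory Set Filter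
open scoped Topology

noncomputable section

/-- The cube `J_i = ∏_k [(i_k - 1)/I, i_k/I]` of the uniform partition of `[0,1]^m`
(the value `j : Fin I` encodes `i_k = j + 1 ∈ {1, …, I}`). -/
def unifCube {m : ℕ} (I : ℕ) (i : Fin m → Fin I) : Set (Fin m → ℝ) :=
  Set.univ.pi fun k => Icc (((i k : ℕ) : ℝ) / I) ((((i k : ℕ) : ℝ) + 1) / I)

open scoped ENNReal

section SquareIntegrals

variable {α : Type*} [MeasurableSpace α] {μ : Measure α} {s : Set α} {f : α → ℝ}

theorem setIntegral_setIntegral_sub_sq (hs : μ s ≠ ∞) (hf : MemLp f 2 (μ.restrict s)) :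
    ∫ u in s, ∫ v in s, (f u - f v) ^ 2 ∂μ ∂μ =
      2 * (μ.real s * ∫ x in s, f x ^ 2 ∂μ - (∫ x in s, f x ∂μ) ^ 2) := by
  have : IsFiniteMeasure (μ.restrict s) := isFiniteMeasure_restrict.2 hs
  have hf1 : Integrable f (μ.restrict s) := hf.integrable one_le_two
  have hf2 : Integrable (fun x => f x ^ 2) (μ.restrict s) := hf.integrable_sq
  have inner (u : α) : ∫ v in s, (f u - f v) ^ 2 ∂μ =
      μ.real s * f u ^ 2 - 2 * (∫ x in s, f x ∂μ) * f u + ∫ x in s, f x ^ 2 ∂μ := by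
    simp_rw [sub_sq]
    rw [integral_add (f := fun v => f u ^ 2 - 2 * f u * f v)
      ((integrable_const _).sub (hf1.const_mul _)) hf2,
      integral_sub (integrable_const _) (hf1.const_mul _), integral_const, integral_const_mul,
      smul_eq_mul, measureReal_restrict_apply_univ]
    ring
  simp_rw [inner]
  rw [integral_add (f := fun u => μ.real s * f u ^ 2 - 2 * (∫ x in s, f x ∂μ) * f u)
    ((hf2.const_mul _).sub (hf1.const_mul _)) (integrable_const _),
    integral_sub (hf2.const_mul _) (hf1.const_mul _), integral_const, integral_const_mul,
    integral_const_mul, smul_eq_mul, measureReal_restrict_apply_univ]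
  ring

theorem integral_sq_eq_toReal_eLpNorm_sq (hf : MemLp f 2 μ) :
    ∫ x, f x ^ 2 ∂μ = (eLpNorm f 2 μ).toReal ^ 2 := by
  have hnorm (x : α) : ‖f x‖ ^ (2 : ℝ≥0∞).toReal = f x ^ 2 := by simp
  simp_rw [hf.eLpNorm_eq_integral_rpow_norm two_ne_zero ENNReal.ofNat_ne_top, hnorm]
  rw [ENNReal.toReal_ofReal (by positivity), ENNReal.toReal_ofNat]
  exact_mod_cast (Real.rpow_inv_natCast_pow (integral_nonneg fun x => sq_nonneg (f x))
    two_ne_zero).symm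

end SquareIntegrals

section Translation

variable {G : Type*} [NormedAddCommGroup G] [MeasurableSpace G] [BorelSpace G]
  {μ : Measure G} [μ.IsAddRightInvariant]

theorem tendsto_eLpNorm_sub_comp_add_nhds_zero [IsLocallyFiniteMeasure μ]
    [μ.InnerRegularCompactLTTop] {E : Type*} [NormedAddCommGroup E] {p : ℝ≥0∞} [Fact (1 ≤ p)]
    (hp : p ≠ ∞) {f : G → E} (hf : MemLp f p μ) :
    Tendsto (fun v => eLpNorm (fun x => f x - f (x + v)) p μ) (𝓝 0) (𝓝 0) := by
  let τ : G → C(G, G) := fun v => ⟨(· + v), continuous_add_const v⟩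
  have hτ : Continuous τ :=
    ContinuousMap.continuous_of_continuous_uncurry _ (continuous_snd.add continuous_fst)
  have hτμ (v : G) : MeasurePreserving (τ v) μ μ := measurePreserving_add_right μ v
  have hlim := tendsto_const_nhds.compMeasurePreservingLp (hτ.tendsto 0) hτμ (hτμ 0) hp
    (f₀ := hf.toLp f)
  refine (tendsto_iff_edist_tendsto_0.1 hlim).congr fun v => ?_
  rw [Lp.toLp_compMeasurePreserving, Lp.toLp_compMeasurePreserving, Lp.edist_toLp_toLp,
    eLpNorm_sub_comm]
  simp only [τ, ContinuousMap.coe_mk, add_zero, Function.comp_def]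
  rfl

variable {f : G → ℝ}

theorem integrable_sub_comp_add_sq (hf : MemLp f 2 μ) (v : G) :
    Integrable (fun x => (f x - f (x + v)) ^ 2) μ :=
  (hf.sub (hf.comp_measurePreserving (measurePreserving_add_right μ v))).integrable_sq

theorem integral_sub_comp_add_sq_le (hf : MemLp f 2 μ) (v : G) :
    ∫ x, (f x - f (x + v)) ^ 2 ∂μ ≤ 4 * ∫ x, f x ^ 2 ∂μ := by
  have hf2 := hf.integrable_sq
  have hfv : Integrable (fun x => f (x + v) ^ 2) μ :=
    (hf.comp_measurePreserving (measurePreserving_add_right μ v)).integrable_sq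
  calc ∫ x, (f x - f (x + v)) ^ 2 ∂μ ≤ ∫ x, (2 * f x ^ 2 + 2 * f (x + v) ^ 2) ∂μ :=
        integral_mono (integrable_sub_comp_add_sq hf v) ((hf2.const_mul 2).add (hfv.const_mul 2))
          fun x => by nlinarith [sq_nonneg (f x + f (x + v))]
    _ = 4 * ∫ x, f x ^ 2 ∂μ := by
        rw [integral_add (hf2.const_mul 2) (hfv.const_mul 2), integral_const_mul,
          integral_const_mul, integral_add_right_eq_self (fun x => f x ^ 2) v]
        ring

theorem tendsto_integral_sub_comp_add_sq [IsLocallyFiniteMeasure μ] [μ.InnerRegularCompactLTTop]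
    (hf : MemLp f 2 μ) :
    Tendsto (fun v => ∫ x, (f x - f (x + v)) ^ 2 ∂μ) (𝓝 0) (𝓝 0) := by
  have hdiff (v : G) : MemLp (fun x => f x - f (x + v)) 2 μ :=
    hf.sub (hf.comp_measurePreserving (measurePreserving_add_right μ v))
  have hnorm_sq := ((ENNReal.tendsto_toReal ENNReal.zero_ne_top).comp
    (tendsto_eLpNorm_sub_comp_add_nhds_zero ENNReal.ofNat_ne_top hf)).pow 2
  simpa [integral_sq_eq_toReal_eLpNorm_sq (hdiff _)] using hnorm_sq

theorem norm_setIntegral_sub_comp_add_sq_le (hf : MemLp f 2 μ) (s : Set G) (v : G) :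
    ‖∫ x in s, (f x - f (x + v)) ^ 2 ∂μ‖ ≤ 4 * ∫ x, f x ^ 2 ∂μ := by
  rw [Real.norm_of_nonneg (integral_nonneg fun x => sq_nonneg _)]
  exact (setIntegral_le_integral (integrable_sub_comp_add_sq hf v)
    (.of_forall fun x => sq_nonneg _)).trans (integral_sub_comp_add_sq_le hf v)

end Translation

section Product

variable {E : Type*} [NormedAddCommGroup E] [NormedSpace ℝ E] [MeasurableSpace E] [BorelSpace E]
  [SecondCountableTopology E] {μ : Measure E} [SFinite μ]
  {f : E → ℝ} {s t : Set E}

theorem stronglyMeasurable_setIntegral_sub_comp_add_smul_sq (hfm : Measurable f) (c : ℝ) :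
    StronglyMeasurable fun z => ∫ u in s, (f u - f (u + c • z)) ^ 2 ∂μ :=
  StronglyMeasurable.integral_prod_left' (f := fun p : E × E => (f p.1 - f (p.1 + c • p.2)) ^ 2)
    (by fun_prop)

theorem integrable_prod_sub_comp_add_smul_sq [μ.IsAddRightInvariant] (hfm : Measurable f)
    (hf : MemLp f 2 μ) (ht : μ t ≠ ∞) (c : ℝ) :
    Integrable (fun p : E × E => (f p.1 - f (p.1 + c • p.2)) ^ 2)
      ((μ.restrict s).prod (μ.restrict t)) := by
  have : IsFiniteMeasure (μ.restrict t) := isFiniteMeasure_restrict.2 ht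
  refine (integrable_prod_iff' (by fun_prop)).2
    ⟨.of_forall fun z => (integrable_sub_comp_add_sq hf (c • z)).restrict, ?_⟩
  simp_rw [norm_pow, Real.norm_eq_abs, sq_abs]
  exact .of_bound (stronglyMeasurable_setIntegral_sub_comp_add_smul_sq hfm c).aestronglyMeasurable
    _ (.of_forall fun z => norm_setIntegral_sub_comp_add_sq_le hf s _)

theorem tendsto_setIntegral_setIntegral_sub_comp_add_smul_sq [μ.IsAddRightInvariant]
    [IsLocallyFiniteMeasure μ] [μ.InnerRegularCompactLTTop] (hfm : Measurable f)
    (hf : MemLp f 2 μ) (ht : μ t ≠ ∞) {c : ℕ → ℝ} (hc : Tendsto c atTop (𝓝 0)) :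
    Tendsto (fun n => ∫ z in t, ∫ u in s, (f u - f (u + c n • z)) ^ 2 ∂μ ∂μ) atTop (𝓝 0) := by
  have : IsFiniteMeasure (μ.restrict t) := isFiniteMeasure_restrict.2 ht
  have hlim (z : E) : Tendsto (fun n => ∫ u in s, (f u - f (u + c n • z)) ^ 2 ∂μ) atTop (𝓝 0) := by
    refine squeeze_zero (fun n => integral_nonneg fun u => sq_nonneg _)
      (fun n => setIntegral_le_integral (integrable_sub_comp_add_sq hf _)
        (.of_forall fun u => sq_nonneg _))
      ((tendsto_integral_sub_comp_add_sq hf).comp ?_)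
    simpa using hc.smul_const z
  simpa using tendsto_integral_of_dominated_convergence _
    (fun n => (stronglyMeasurable_setIntegral_sub_comp_add_smul_sq hfm (c n)).aestronglyMeasurable)
    (integrable_const (4 * ∫ x, f x ^ 2 ∂μ))
    (fun n => .of_forall fun z => norm_setIntegral_sub_comp_add_sq_le hf s _)
    (.of_forall hlim)

end Product

theorem setIntegral_preimage_add_inv_smul {E F : Type*} [NormedAddCommGroup E] [NormedSpace ℝ E]
    [FiniteDimensional ℝ E] [MeasurableSpace E] [BorelSpace E] [NormedAddCommGroup F]
    [NormedSpace ℝ F] (μ : Measure E) [μ.IsAddHaarMeasure] (g : E → F) (u : E) {R : ℝ}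
    (hR : 0 ≤ R) {s : Set E} (hs : MeasurableSet s) :
    ∫ z in (fun z => u + R⁻¹ • z) ⁻¹' s, g (u + R⁻¹ • z) ∂μ =
      R ^ Module.finrank ℝ E • ∫ x in s, g x ∂μ := by
  have hmeas : Measurable fun z : E => u + R⁻¹ • z := by fun_prop
  rw [← integral_indicator (hmeas hs), ← integral_indicator hs,
    ← integral_add_left_eq_self (μ := μ) (s.indicator g) u,
    ← Measure.integral_comp_inv_smul_of_nonneg μ (fun x => s.indicator g (u + x)) hR]
  rfl

section Cubes

variable {m : ℕ} {I : ℕ}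

theorem volume_pi_Icc_ne_top (a b : ℝ) : volume (univ.pi fun _ : Fin m => Icc a b) ≠ ∞ :=
  (isCompact_univ_pi fun _ => isCompact_Icc).measure_lt_top.ne

theorem measurableSet_unifCube (i : Fin m → Fin I) : MeasurableSet (unifCube I i) :=
  .univ_pi fun _ => measurableSet_Icc

theorem isCompact_unifCube (i : Fin m → Fin I) : IsCompact (unifCube I i) :=
  isCompact_univ_pi fun _ => isCompact_Icc

theorem measureReal_unifCube (i : Fin m → Fin I) :
    volume.real (unifCube I i) = ((I : ℝ) ^ m)⁻¹ := by
  have hlen (k : Fin m) : volume (Icc (((i k : ℕ) : ℝ) / I) ((((i k : ℕ) : ℝ) + 1) / I)) =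
      ENNReal.ofReal (I : ℝ)⁻¹ := by
    rw [Real.volume_Icc, add_div, add_sub_cancel_left, one_div]
  rw [measureReal_def, unifCube, volume_pi_pi]
  simp [hlen, inv_pow]

theorem unifCube_subset_pi_Icc_zero_one (i : Fin m → Fin I) :
    unifCube I i ⊆ univ.pi fun _ => Icc 0 1 := by
  intro x hx k _
  have hI : (0 : ℝ) < I := Nat.cast_pos.2 (i k).pos
  obtain ⟨hlo, hhi⟩ := hx k (mem_univ k)
  refine ⟨(by positivity : (0 : ℝ) ≤ _).trans hlo, hhi.trans ?_⟩
  rw [div_le_one hI]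
  exact_mod_cast (i k).isLt

theorem subsingleton_Icc_div_inter_Icc_div {a b : ℕ} (hab : a ≠ b) (I : ℕ) :
    (Icc ((a : ℝ) / I) ((a + 1) / I) ∩ Icc ((b : ℝ) / I) ((b + 1) / I)).Subsingleton := by
  wlog hlt : a < b generalizing a b
  · rw [inter_comm]
    exact this hab.symm (by omega)
  have hgap : ((a : ℝ) + 1) / I ≤ b / I := by gcongr; exact_mod_cast hlt
  exact subsingleton_singleton.anti fun x hx => le_antisymm (hx.1.2.trans hgap) hx.2.1

theorem pairwise_aedisjoint_unifCube :
    Pairwise fun i j : Fin m → Fin I => AEDisjoint volume (unifCube I i) (unifCube I j) := by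
  intro i j hij
  obtain ⟨k, hk⟩ := Function.ne_iff.1 hij
  rw [AEDisjoint, unifCube, unifCube, ← pi_inter_distrib, volume_pi_pi]
  exact Finset.prod_eq_zero (Finset.mem_univ k)
    ((subsingleton_Icc_div_inter_Icc_div (Fin.val_ne_of_ne hk) I).measure_zero _)

theorem mem_pi_Icc_neg_one_one_of_add_inv_smul_mem_unifCube {i : Fin m → Fin I}
    {u z : Fin m → ℝ} (hu : u ∈ unifCube I i) (hz : u + (I : ℝ)⁻¹ • z ∈ unifCube I i) :
    z ∈ univ.pi fun _ => Icc (-1) 1 := by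
  intro k _
  have hI : (0 : ℝ) < I := Nat.cast_pos.2 (i k).pos
  obtain ⟨hu₁, hu₂⟩ := hu k (mem_univ k)
  obtain ⟨hz₁, hz₂⟩ := hz k (mem_univ k)
  simp only [Pi.add_apply, Pi.smul_apply, smul_eq_mul] at hz₁ hz₂
  have : |(I : ℝ)⁻¹ * z k| ≤ (I : ℝ)⁻¹ := by
    rw [abs_le]; constructor <;> linarith [add_div ((i k : ℕ) : ℝ) 1 I, one_div (I : ℝ)]
  rw [abs_mul, abs_of_pos (inv_pos.2 hI)] at this
  exact abs_le.1 (le_of_mul_le_mul_left (by simpa using this) (inv_pos.2 hI))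

variable {h : (Fin m → ℝ) → ℝ}

def cubeVarianceTerm (h : (Fin m → ℝ) → ℝ) (I : ℕ) (i : Fin m → Fin I) : ℝ :=
  (∫ x in unifCube I i, h x ^ 2) - (I : ℝ) ^ m * (∫ x in unifCube I i, h x) ^ 2

theorem cubeVarianceTerm_eq (hh : MemLp h 2) (hI : 0 < I) (i : Fin m → Fin I) :
    cubeVarianceTerm h I i =
      (I : ℝ) ^ m / 2 * ∫ u in unifCube I i, ∫ v in unifCube I i, (h u - h v) ^ 2 := by
  have hIm : (I : ℝ) ^ m ≠ 0 := pow_ne_zero _ (Nat.cast_ne_zero.2 hI.ne')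
  rw [setIntegral_setIntegral_sub_sq (isCompact_unifCube i).measure_lt_top.ne (hh.restrict _),
    measureReal_unifCube, cubeVarianceTerm]
  field_simp

theorem cubeVarianceTerm_nonneg (hh : MemLp h 2) (hI : 0 < I) (i : Fin m → Fin I) :
    0 ≤ cubeVarianceTerm h I i := by
  rw [cubeVarianceTerm_eq hh hI i]
  exact mul_nonneg (by positivity) (integral_nonneg fun u => integral_nonneg fun v => sq_nonneg _)

theorem pow_mul_setIntegral_unifCube_sub_sq_le {i : Fin m → Fin I} {u : Fin m → ℝ}
    (hu : u ∈ unifCube I i)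
    (hint : IntegrableOn (fun z => (h u - h (u + (I : ℝ)⁻¹ • z)) ^ 2)
      (univ.pi fun _ => Icc (-1) 1)) :
    (I : ℝ) ^ m * ∫ v in unifCube I i, (h u - h v) ^ 2 ≤
      ∫ z in univ.pi (fun _ => Icc (-1) 1), (h u - h (u + (I : ℝ)⁻¹ • z)) ^ 2 := by
  have hsubst := setIntegral_preimage_add_inv_smul volume (fun v => (h u - h v) ^ 2) u
    (Nat.cast_nonneg I) (measurableSet_unifCube i)
  rw [Module.finrank_fin_fun, smul_eq_mul] at hsubst
  rw [← hsubst]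
  exact setIntegral_mono_set hint (.of_forall fun z => sq_nonneg _)
    (Eventually.of_forall fun z hz => mem_pi_Icc_neg_one_one_of_add_inv_smul_mem_unifCube hu hz)

theorem cubeVarianceTerm_le (hhm : Measurable h) (hh : MemLp h 2) (hI : 0 < I)
    (i : Fin m → Fin I) :
    cubeVarianceTerm h I i ≤ 1 / 2 * ∫ u in unifCube I i,
      ∫ z in univ.pi (fun _ => Icc (-1) 1), (h u - h (u + (I : ℝ)⁻¹ • z)) ^ 2 := by
  have hslices := integrable_prod_sub_comp_add_smul_sq (s := unifCube I i) hhm hh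
    (volume_pi_Icc_ne_top (-1) 1) (I : ℝ)⁻¹
  calc cubeVarianceTerm h I i
      = 1 / 2 * ∫ u in unifCube I i, (I : ℝ) ^ m * ∫ v in unifCube I i, (h u - h v) ^ 2 := by
        rw [cubeVarianceTerm_eq hh hI i, integral_const_mul]
        ring
    _ ≤ _ := by
        gcongr 1 / 2 * ?_
        refine integral_mono_of_nonneg
          (.of_forall fun u => mul_nonneg (by positivity) (integral_nonneg fun v => sq_nonneg _))
          hslices.integral_prod_left ?_
        filter_upwards [ae_restrict_mem (measurableSet_unifCube i), hslices.prod_right_ae]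
          with u hu hint
        exact pow_mul_setIntegral_unifCube_sub_sq_le hu hint

theorem sum_cubeVarianceTerm_le (hhm : Measurable h) (hh : MemLp h 2) (hI : 0 < I) :
    ∑ i, cubeVarianceTerm h I i ≤ 1 / 2 * ∫ u in univ.pi (fun _ => Icc 0 1),
      ∫ z in univ.pi (fun _ => Icc (-1) 1), (h u - h (u + (I : ℝ)⁻¹ • z)) ^ 2 := by
  set K : (Fin m → ℝ) → ℝ := fun u =>
    ∫ z in univ.pi (fun _ => Icc (-1) 1), (h u - h (u + (I : ℝ)⁻¹ • z)) ^ 2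
  have hK : IntegrableOn K (univ.pi fun _ => Icc 0 1) :=
    (integrable_prod_sub_comp_add_smul_sq hhm hh (volume_pi_Icc_ne_top (-1) 1)
      _).integral_prod_left
  have hunion : (⋃ i : Fin m → Fin I, unifCube I i) ⊆ univ.pi fun _ => Icc 0 1 :=
    iUnion_subset unifCube_subset_pi_Icc_zero_one
  calc ∑ i, cubeVarianceTerm h I i ≤ ∑ i, 1 / 2 * ∫ u in unifCube I i, K u :=
        Finset.sum_le_sum fun i _ => cubeVarianceTerm_le hhm hh hI i
    _ = 1 / 2 * ∫ u in ⋃ i, unifCube I i, K u := by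
        rw [← Finset.mul_sum, integral_iUnion_ae
          (fun i => (measurableSet_unifCube i).nullMeasurableSet) pairwise_aedisjoint_unifCube
          (hK.mono_set hunion), tsum_fintype]
    _ ≤ 1 / 2 * ∫ u in univ.pi (fun _ => Icc 0 1), K u := by
        gcongr 1 / 2 * ?_
        exact setIntegral_mono_set hK
          (.of_forall fun u => integral_nonneg fun z => sq_nonneg _) hunion.eventuallyLE

end Cubes

theorem sum_cube_variance_terms_le_and_tendsto_zero_general
    {m : ℕ} (h : (Fin m → ℝ) → ℝ) (hmeas : Measurable h)
    (hsq : Integrable (fun x => h x ^ 2)) :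
    (∀ (I : ℕ), 0 < I → ∀ i : Fin m → Fin I,
      0 ≤ (∫ x in unifCube I i, h x ^ 2) - (I : ℝ) ^ m * (∫ x in unifCube I i, h x) ^ 2) ∧
    (∀ I : ℕ, 0 < I →
      ∑ i : Fin m → Fin I,
          ((∫ x in unifCube I i, h x ^ 2) - (I : ℝ) ^ m * (∫ x in unifCube I i, h x) ^ 2) ≤
        1 / 2 * ∫ u in Set.univ.pi (fun _ : Fin m => Icc (0 : ℝ) 1),
          ∫ z in Set.univ.pi (fun _ : Fin m => Icc (-1 : ℝ) 1),
            (h u - h (fun k => u k + z k / I)) ^ 2) ∧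
    Tendsto (fun I : ℕ => ∑ i : Fin m → Fin I,
        ((∫ x in unifCube I i, h x ^ 2) - (I : ℝ) ^ m * (∫ x in unifCube I i, h x) ^ 2))
      atTop (𝓝 0) := by
  have hh : MemLp h 2 := (memLp_two_iff_integrable_sq hmeas.aestronglyMeasurable).2 hsq
  have hZ := volume_pi_Icc_ne_top (m := m) (-1) 1
  have hshift (I : ℕ) (u z : Fin m → ℝ) : (fun k => u k + z k / I) = u + (I : ℝ)⁻¹ • z := by
    ext k
    simp [div_eq_inv_mul]
  have hswapped (I : ℕ) (hI : 0 < I) : ∑ i, cubeVarianceTerm h I i ≤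
      1 / 2 * ∫ z in univ.pi (fun _ => Icc (-1) 1), ∫ u in univ.pi (fun _ => Icc 0 1),
        (h u - h (u + (I : ℝ)⁻¹ • z)) ^ 2 := by
    rw [← integral_integral_swap (integrable_prod_sub_comp_add_smul_sq hmeas hh hZ _)]
    exact sum_cubeVarianceTerm_le hmeas hh hI
  have hlim := (tendsto_setIntegral_setIntegral_sub_comp_add_smul_sq
    (s := univ.pi fun _ => Icc 0 1) hmeas hh hZ tendsto_inv_atTop_nhds_zero_nat).const_mul (1 / 2)
  rw [mul_zero] at hlim
  refine ⟨fun I hI i => cubeVarianceTerm_nonneg hh hI i, fun I hI => ?_, ?_⟩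
  · simp_rw [hshift]
    exact sum_cubeVarianceTerm_le hmeas hh hI
  · exact squeeze_zero'
      ((eventually_gt_atTop 0).mono fun I hI =>
        Finset.sum_nonneg fun i _ => cubeVarianceTerm_nonneg hh hI i)
      ((eventually_gt_atTop 0).mono hswapped) hlim

/-- Key approximation estimate (proof of Lemma 6.3 in Etoré–Fort–Jourdain–Moulines,
"On adaptive stratification"): for a square-integrable `h̃` vanishing outside `[0,1]^m`,
each term `∫_{J_i} h̃² dλ - I^m (∫_{J_i} h̃ dλ)²` is nonnegative, their sum is at most
`(1/2) ∫_{[0,1]^m} ∫_{[-1,1]^m} (h̃(u) - h̃(u + z/I))² dz du`, and the sum tends to `0`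
as `I → ∞`. -/
theorem sum_cube_variance_terms_le_and_tendsto_zero
    {m : ℕ} (h : (Fin m → ℝ) → ℝ) (hmeas : Measurable h)
    (hsq : Integrable (fun x => h x ^ 2))
    (hsupp : ∀ x : Fin m → ℝ, x ∉ Set.univ.pi (fun _ => Icc (0 : ℝ) 1) → h x = 0) :
    (∀ (I : ℕ), 0 < I → ∀ i : Fin m → Fin I,
      0 ≤ (∫ x in unifCube I i, h x ^ 2) - (I : ℝ) ^ m * (∫ x in unifCube I i, h x) ^ 2) ∧
    (∀ I : ℕ, 0 < I →
      ∑ i : Fin m → Fin I,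
          ((∫ x in unifCube I i, h x ^ 2) - (I : ℝ) ^ m * (∫ x in unifCube I i, h x) ^ 2) ≤
        1 / 2 * ∫ u in Set.univ.pi (fun _ : Fin m => Icc (0 : ℝ) 1),
          ∫ z in Set.univ.pi (fun _ : Fin m => Icc (-1 : ℝ) 1),
            (h u - h (fun k => u k + z k / I)) ^ 2) ∧
    Tendsto (fun I : ℕ => ∑ i : Fin m → Fin I,
        ((∫ x in unifCube I i, h x ^ 2) - (I : ℝ) ^ m * (∫ x in unifCube I i, h x) ^ 2))
      atTop (𝓝 0) :=
  sum_cube_variance_terms_le_and_tendsto_zero_general h hmeas hsq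

end
end

section
/- Assume ∫_{ℝ^m} f√(v − ς²) dλ > 0 and define the density χ*_μ = f√(v − ς²) / ∫_{ℝ^m} f√(v − ς²) dλ. Then ς²_∞(μ,χ*_μ) = (∫_{ℝ^m} f√(v − ς²) dλ)², and for every probability density χ on ℝ^m, ς²_∞(μ,χ) ≥ ς²_∞(μ,χ*_μ), where ς²_∞(μ,χ) = ∫_{ℝ^m} f²(v − ς²)/χ dλ; i.e., χ*_μ minimizes χ ↦ ς²_∞(μ,χ) over probability densities. -/
open MeasureTheory Set Filter
open scoped ENNReal Topology

noncomputable section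

/-!
Write `g = f √(v - ς²)`. At `χ*` the integrand is pointwise `g · ∫ g`, which gives the value;
for a general density `χ` the lower bound is the Cauchy–Schwarz inequality
`(∫ g)² ≤ (∫ g² / χ) (∫ χ)`. The only subtlety is that `f` is not assumed nonnegative: the
event `μᵀY ∈ {f < 0}` is null, so both conditional moments vanish a.e. on `{f < 0}`, and there
`g = 0`.
-/

namespace MeasureTheory

variable {α : Type*} [MeasurableSpace α] {μ : Measure α}

theorem sq_lintegral_le_lintegral_sq_div_mul_lintegral {a b : α → ℝ≥0∞}
    (ha : AEMeasurable a μ) (hb : AEMeasurable b μ) (hb_top : ∀ᵐ x ∂μ, b x ≠ ∞)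
    (hb_zero : ∫⁻ x, b x ∂μ ≠ 0) :
    (∫⁻ x, a x ∂μ) ^ 2 ≤ (∫⁻ x, a x ^ 2 / b x ∂μ) * ∫⁻ x, b x ∂μ := by
  by_cases h_top : ∫⁻ x, a x ^ 2 / b x ∂μ = ∞
  · rw [h_top, ENNReal.top_mul hb_zero]
    exact le_top
  have h_split : ∀ᵐ x ∂μ, a x = (a x ^ 2 / b x) ^ (2⁻¹ : ℝ) * b x ^ (2⁻¹ : ℝ) := by
    filter_upwards [ae_lt_top' ((ha.pow_const 2).div hb) h_top, hb_top] with x hx hbx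
    rw [← ENNReal.mul_rpow_of_nonneg _ _ (by norm_num)]
    rcases eq_or_ne (b x) 0 with hb0 | hb0
    · -- `a ^ 2 / 0 = ∞` unless `a = 0`
      have : a x = 0 := by
        by_contra ha0
        simp [hb0, ENNReal.div_zero (pow_ne_zero 2 ha0)] at hx
      simp [this]
    · rw [ENNReal.div_mul_cancel hb0 hbx, ← ENNReal.rpow_natCast, Nat.cast_ofNat,
        ENNReal.rpow_rpow_inv two_ne_zero]
  have holder := ENNReal.lintegral_mul_le_Lp_mul_Lq μ Real.HolderConjugate.two_two
    (((ha.pow_const 2).div hb).pow_const (2⁻¹ : ℝ)) (hb.pow_const (2⁻¹ : ℝ))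
  simp only [Pi.mul_apply, ← ENNReal.rpow_mul] at holder
  norm_num at holder
  calc (∫⁻ x, a x ∂μ) ^ 2
      ≤ ((∫⁻ x, a x ^ 2 / b x ∂μ) ^ (2⁻¹ : ℝ) * (∫⁻ x, b x ∂μ) ^ (2⁻¹ : ℝ)) ^ 2 := by
        rw [lintegral_congr_ae h_split]
        gcongr
        simpa only [one_div] using holder
    _ = (∫⁻ x, a x ^ 2 / b x ∂μ) * ∫⁻ x, b x ∂μ := by
        rw [← ENNReal.mul_rpow_of_nonneg _ _ (by norm_num), ← ENNReal.rpow_natCast,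
          Nat.cast_ofNat, ENNReal.rpow_inv_rpow two_ne_zero]

theorem ofReal_sq_integral_le_lintegral_ofReal_sq_div {g χ : α → ℝ}
    (hg : AEMeasurable g μ) (hχ : AEMeasurable χ μ) (hχ_nonneg : 0 ≤ᵐ[μ] χ)
    (hχ_one : ∫ x, χ x ∂μ = 1) :
    ENNReal.ofReal ((∫ x, g x ∂μ) ^ 2) ≤
      ∫⁻ x, ENNReal.ofReal (g x ^ 2) / ENNReal.ofReal (χ x) ∂μ := by
  have ofReal_sq (r : ℝ) : ENNReal.ofReal (r ^ 2) = ‖r‖ₑ ^ 2 := by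
    rw [← sq_abs, ENNReal.ofReal_pow (abs_nonneg r), Real.enorm_eq_ofReal_abs]
  have hχ_lintegral : ∫⁻ x, ENNReal.ofReal (χ x) ∂μ = 1 := by
    rw [← ofReal_integral_eq_lintegral_ofReal
      (Integrable.of_integral_ne_zero (by simp [hχ_one])) hχ_nonneg, hχ_one, ENNReal.ofReal_one]
  simp only [ofReal_sq]
  calc ‖∫ x, g x ∂μ‖ₑ ^ 2 ≤ (∫⁻ x, ‖g x‖ₑ ∂μ) ^ 2 := by
        gcongr
        exact enorm_integral_le_lintegral_enorm g
    _ ≤ (∫⁻ x, ‖g x‖ₑ ^ 2 / ENNReal.ofReal (χ x) ∂μ) * ∫⁻ x, ENNReal.ofReal (χ x) ∂μ :=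
        sq_lintegral_le_lintegral_sq_div_mul_lintegral hg.enorm hχ.ennreal_ofReal
          (ae_of_all _ fun _ => ENNReal.ofReal_ne_top) (by simp [hχ_lintegral])
    _ = ∫⁻ x, ‖g x‖ₑ ^ 2 / ENNReal.ofReal (χ x) ∂μ := by rw [hχ_lintegral, mul_one]

theorem lintegral_ofReal_sq_div_ofReal_div_integral {g : α → ℝ} (hg : Integrable g μ)
    (hg_nonneg : 0 ≤ᵐ[μ] g) (hg_pos : 0 < ∫ x, g x ∂μ) :
    ∫⁻ x, ENNReal.ofReal (g x ^ 2) / ENNReal.ofReal (g x / ∫ y, g y ∂μ) ∂μ =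
      ENNReal.ofReal ((∫ x, g x ∂μ) ^ 2) := by
  set I := ∫ x, g x ∂μ
  have h_pointwise : ∀ᵐ x ∂μ,
      ENNReal.ofReal (g x ^ 2) / ENNReal.ofReal (g x / I) = ENNReal.ofReal (g x * I) := by
    filter_upwards [hg_nonneg] with x hx
    rcases hx.eq_or_lt with hx0 | hx0
    · simp [← hx0]
    · rw [← ENNReal.ofReal_div_of_pos (div_pos hx0 hg_pos)]
      congr 1
      field_simp
  rw [lintegral_congr_ae h_pointwise, ← ofReal_integral_eq_lintegral_ofReal (hg.mul_const I)
    (hg_nonneg.mono fun x hx => mul_nonneg hx hg_pos.le), integral_mul_const, sq]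

theorem ae_eq_zero_of_forall_setIntegral_eq_zero [SigmaFinite μ] {h : α → ℝ}
    (hh : Measurable h) (h_zero : ∀ s, MeasurableSet s → ∫ x in s, h x ∂μ = 0) :
    h =ᵐ[μ] 0 := by
  set B : ℕ → Set α := fun n => {x | |h x| ≤ n}
  have hB : ∀ n, MeasurableSet (B n) := fun n => measurableSet_le hh.abs measurable_const
  have hB_univ : ⋃ n, B n = univ :=
    iUnion_eq_univ_iff.mpr fun x => exists_nat_ge |h x|
  -- on each `B n` the function is bounded, hence integrable on sets of finite measure
  have h_restrict : ∀ n, h =ᵐ[μ.restrict (B n)] 0 := fun n =>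
    ae_eq_zero_of_forall_setIntegral_eq_of_sigmaFinite
      (fun s hs hμs => by
        refine Measure.integrableOn_of_bounded (M := n) hμs.ne hh.aestronglyMeasurable ?_
        rw [Measure.restrict_restrict hs]
        filter_upwards [ae_restrict_mem (hs.inter (hB n))] with x hx
        exact hx.2)
      (fun s hs _ => by rw [Measure.restrict_restrict hs]; exact h_zero _ (hs.inter (hB n)))
  rw [EventuallyEq, ← Measure.restrict_univ (μ := μ), ← hB_univ]
  exact (ae_restrict_iUnion_iff B _).mpr h_restrict

theorem ae_eq_zero_on_of_measure_preimage_eq_zero {Ω : Type*} [MeasurableSpace Ω]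
    [SigmaFinite μ] {P : Measure Ω} {X : Ω → α} {h : α → ℝ} {ψ : Ω → ℝ} (hh : Measurable h)
    (h_push : ∀ s, MeasurableSet s → ∫ x in s, h x ∂μ = ∫ ω in {ω | X ω ∈ s}, ψ ω ∂P)
    {t : Set α} (ht : MeasurableSet t) (ht_zero : P {ω | X ω ∈ t} = 0) :
    ∀ᵐ x ∂μ, x ∈ t → h x = 0 := by
  rw [← ae_restrict_iff' ht]
  refine ae_eq_zero_of_forall_setIntegral_eq_zero hh fun s hs => ?_
  rw [Measure.restrict_restrict hs, h_push _ (hs.inter ht),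
    Measure.restrict_eq_zero.mpr (measure_mono_null (fun ω hω => hω.2) ht_zero),
    integral_zero_measure]

end MeasureTheory

theorem ENNReal.ofReal_sq_mul_eq_ofReal_mul_sqrt_sq (a w : ℝ) :
    ENNReal.ofReal (a ^ 2 * w) = ENNReal.ofReal ((a * √w) ^ 2) := by
  rcases le_or_gt 0 w with hw | hw
  · rw [mul_pow, Real.sq_sqrt hw]
  · rw [Real.sqrt_eq_zero_of_nonpos hw.le, mul_zero,
      ENNReal.ofReal_of_nonpos (mul_nonpos_of_nonneg_of_nonpos (sq_nonneg a) hw.le)]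
    simp

/-- The conventions `z / 0 = +∞` for `z > 0` and `0 / 0 = 0` are those of division in `ℝ≥0∞`. -/
theorem optimal_allocation_density_minimizes_limiting_variance_general
    {d m : ℕ}
    {Ω : Type*} [MeasurableSpace Ω] (P : Measure Ω)
    (Y : Ω → Fin d → ℝ)
    (φ : (Fin d → ℝ) → ℝ)
    (μ : Matrix (Fin d) (Fin m) ℝ)
    (f ς v : (Fin m → ℝ) → ℝ)
    (hf : Measurable f) (hς : Measurable ς) (hv : Measurable v)
    (hdens : ∀ S : Set (Fin m → ℝ), MeasurableSet S →
      P {ω | (fun k => ∑ j, μ j k * Y ω j) ∈ S} = ∫⁻ x in S, ENNReal.ofReal (f x))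
    (hςf : ∀ S : Set (Fin m → ℝ), MeasurableSet S →
      ∫ x in S, ς x * f x = ∫ ω in {ω | (fun k => ∑ j, μ j k * Y ω j) ∈ S}, φ (Y ω) ∂P)
    (hvf : ∀ S : Set (Fin m → ℝ), MeasurableSet S →
      ∫ x in S, v x * f x = ∫ ω in {ω | (fun k => ∑ j, μ j k * Y ω j) ∈ S}, φ (Y ω) ^ 2 ∂P)
    (hpos : 0 < ∫ x, f x * Real.sqrt (v x - ς x ^ 2)) :
    (∫⁻ x, ENNReal.ofReal (f x ^ 2 * (v x - ς x ^ 2)) /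
        ENNReal.ofReal (f x * Real.sqrt (v x - ς x ^ 2) /
          ∫ y, f y * Real.sqrt (v y - ς y ^ 2)) =
      ENNReal.ofReal ((∫ x, f x * Real.sqrt (v x - ς x ^ 2)) ^ 2)) ∧
    ∀ χ : (Fin m → ℝ) → ℝ, Measurable χ → (∀ x, 0 ≤ χ x) → (∫ x, χ x) = 1 →
      ENNReal.ofReal ((∫ x, f x * Real.sqrt (v x - ς x ^ 2)) ^ 2) ≤
        ∫⁻ x, ENNReal.ofReal (f x ^ 2 * (v x - ς x ^ 2)) / ENNReal.ofReal (χ x) := by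
  have h_neg : MeasurableSet {x | f x < 0} := measurableSet_lt hf measurable_const
  have h_neg_null : P {ω | (fun k => ∑ j, μ j k * Y ω j) ∈ {x | f x < 0}} = 0 := by
    rw [hdens _ h_neg]
    exact setLIntegral_eq_zero h_neg fun x hx => ENNReal.ofReal_of_nonpos (le_of_lt hx)
  -- where `f < 0`, the conditional moments vanish, so `v - ς ^ 2 = 0`
  have hς_zero := ae_eq_zero_on_of_measure_preimage_eq_zero (hς.mul hf) hςf h_neg h_neg_null
  have hv_zero := ae_eq_zero_on_of_measure_preimage_eq_zero (hv.mul hf) hvf h_neg h_neg_null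
  have hg_nonneg : 0 ≤ᵐ[volume] fun x => f x * √(v x - ς x ^ 2) := by
    filter_upwards [hς_zero, hv_zero] with x hςx hvx
    rcases le_or_gt 0 (f x) with hfx | hfx
    · exact mul_nonneg hfx (Real.sqrt_nonneg _)
    · simp [(mul_eq_zero.mp (hςx hfx)).resolve_right hfx.ne,
        (mul_eq_zero.mp (hvx hfx)).resolve_right hfx.ne]
  simp only [ENNReal.ofReal_sq_mul_eq_ofReal_mul_sqrt_sq]
  refine ⟨lintegral_ofReal_sq_div_ofReal_div_integral (Integrable.of_integral_ne_zero hpos.ne')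
    hg_nonneg hpos, fun χ hχ hχ_nonneg hχ_one => ?_⟩
  exact ofReal_sq_integral_le_lintegral_ofReal_sq_div
    (hf.mul (hv.sub (hς.pow_const 2)).sqrt).aemeasurable hχ.aemeasurable
    (ae_of_all _ hχ_nonneg) hχ_one

/-- Optimality of the allocation density `χ*_μ = f √(v - ς²) / ∫ f √(v - ς²) dλ`
(Etoré–Fort–Jourdain–Moulines, "On adaptive stratification", Section 3): the limiting
variance `ς²_∞(μ, χ) = ∫ f² (v - ς²) / χ dλ` (with the conventions `z/0 = +∞` for `z > 0`
and `0/0 = 0`, encoded by `ℝ≥0∞`-valued division) satisfies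
`ς²_∞(μ, χ*_μ) = (∫ f √(v - ς²) dλ)²` and `ς²_∞(μ, χ) ≥ ς²_∞(μ, χ*_μ)` for every
probability density `χ` on `ℝ^m`. -/
theorem optimal_allocation_density_minimizes_limiting_variance
    {d m : ℕ} (hm : m < d)
    {Ω : Type*} [MeasurableSpace Ω] (P : Measure Ω) [IsProbabilityMeasure P]
    (Y : Ω → Fin d → ℝ) (hY : Measurable Y)
    (φ : (Fin d → ℝ) → ℝ) (hφ : Measurable φ)
    (hφsq : Integrable (fun ω => φ (Y ω) ^ 2) P)
    (μ : Matrix (Fin d) (Fin m) ℝ) (hμ : μ.transpose * μ = 1)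
    (f ς v : (Fin m → ℝ) → ℝ)
    (hf : Measurable f) (hς : Measurable ς) (hv : Measurable v)
    (hdens : ∀ S : Set (Fin m → ℝ), MeasurableSet S →
      P {ω | (fun k => ∑ j, μ j k * Y ω j) ∈ S} = ∫⁻ x in S, ENNReal.ofReal (f x))
    (hςf : ∀ S : Set (Fin m → ℝ), MeasurableSet S →
      ∫ x in S, ς x * f x = ∫ ω in {ω | (fun k => ∑ j, μ j k * Y ω j) ∈ S}, φ (Y ω) ∂P)
    (hvf : ∀ S : Set (Fin m → ℝ), MeasurableSet S →
      ∫ x in S, v x * f x = ∫ ω in {ω | (fun k => ∑ j, μ j k * Y ω j) ∈ S}, φ (Y ω) ^ 2 ∂P)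
    (hpos : 0 < ∫ x, f x * Real.sqrt (v x - ς x ^ 2)) :
    (∫⁻ x, ENNReal.ofReal (f x ^ 2 * (v x - ς x ^ 2)) /
        ENNReal.ofReal (f x * Real.sqrt (v x - ς x ^ 2) /
          ∫ y, f y * Real.sqrt (v y - ς y ^ 2)) =
      ENNReal.ofReal ((∫ x, f x * Real.sqrt (v x - ς x ^ 2)) ^ 2)) ∧
    ∀ χ : (Fin m → ℝ) → ℝ, Measurable χ → (∀ x, 0 ≤ χ x) → (∫ x, χ x) = 1 →
      ENNReal.ofReal ((∫ x, f x * Real.sqrt (v x - ς x ^ 2)) ^ 2) ≤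
        ∫⁻ x, ENNReal.ofReal (f x ^ 2 * (v x - ς x ^ 2)) / ENNReal.ofReal (χ x) :=
  optimal_allocation_density_minimizes_limiting_variance_general P Y φ μ f ς v hf hς hv hdens hςf
    hvf hpos
end
end

section
/- Let z ∈ ℝ, h : ℝ^d → ℝ a locally bounded Lebesgue-integrable function, and μ ∈ ℝ^d nonzero. Assume h is continuous λ_z^μ-almost everywhere and there exists ε > 0 such that lim_{M→∞} sup_{|ν−μ|≤ε} ∫ |y| 1_{{|y|≥M}} |h(y)| dλ_z^ν(y) = 0. Then the vector-valued map γ(h,·) : ν ↦ ∫ (y/|ν|) h(y) dλ_z^ν(y), defined on ℝ^d \ {0}, is continuous at μ. -/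
open MeasureTheory Set Filter Metric
open scoped ENNReal Topology

noncomputable section

/-- `λ_z^ν`: the `(d-1)`-dimensional Hausdorff measure on `ℝ^d` restricted to the
hyperplane `{y : ⟨ν, y⟩ = z}` (the surface measure of the hyperplane). -/
def hypMeasure {d : ℕ} (ν : EuclideanSpace ℝ (Fin d)) (z : ℝ) :
    Measure (EuclideanSpace ℝ (Fin d)) :=
  (μH[(d : ℝ) - 1]).restrict {y | (inner ℝ ν y : ℝ) = z}

/-!
Each hyperplane `{y | ⟪ν, y⟫ = z}` is the image of `ℝ^(d-1)` under an affine isometry `Φ_ν`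
(the foot point `(z / ‖ν‖²) ν` plus a rotation carrying `μᗮ` onto `νᗮ`), chosen so that
`ν ↦ Φ_ν x` is continuous at `μ`. Hence `λ_z^ν` is the image of `μH[d-1]` under `Φ_ν`, and
`γ(h, ν) = ‖ν‖⁻¹ ∫ h(Φ_ν x) Φ_ν x dμH[d-1](x)`. On a fixed ball `‖x‖ ≤ R` the integrand is
bounded uniformly in `ν` near `μ` and converges almost everywhere, because `h` is continuous
`λ_z^μ`-a.e.; so dominated convergence applies there. Outside the ball, `‖x‖ ≤ ‖Φ_ν x‖` bounds
the contribution by the uniform tail hypothesis.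
-/

open scoped RealInnerProductSpace

section Rotation

variable {E : Type*} [NormedAddCommGroup E] [InnerProductSpace ℝ E]

theorem continuousAt_reflection_orthogonal_singleton (x : E) {w₀ : E} (hw₀ : w₀ ≠ 0) :
    ContinuousAt (fun w : E => (ℝ ∙ w)ᗮ.reflection x) w₀ := by
  simp only [Submodule.reflection_orthogonal_apply, Submodule.reflection_singleton_apply,
    RCLike.ofReal_real_eq_id, id]
  have : ‖w₀‖ ^ 2 ≠ 0 := by positivity
  fun_prop (disch := assumption)

/-- A product of two reflections rather than the single reflection in `(u - v)ᗮ`, so that it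
depends continuously on `v` at `v = u`. -/
def rotationTo (u v : E) : E ≃ₗᵢ[ℝ] E :=
  (ℝ ∙ u)ᗮ.reflection.trans (ℝ ∙ (u + v))ᗮ.reflection

theorem rotationTo_apply_self {u v : E} (h : ‖u‖ = ‖v‖) : rotationTo u v u = v := by
  have := Submodule.reflection_sub (v := u) (w := -v) (by rwa [norm_neg])
  rw [sub_neg_eq_add] at this
  simp [rotationTo, Submodule.reflection_orthogonalComplement_singleton_eq_neg, this]

theorem inner_rotationTo_apply {u v : E} (h : ‖u‖ = ‖v‖) (x : E) :
    ⟪v, rotationTo u v x⟫ = ⟪u, x⟫ := by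
  simpa only [rotationTo_apply_self h] using (rotationTo u v).inner_map_map u x

theorem continuousAt_rotationTo_apply (u x : E) {v₀ : E} (h : u + v₀ ≠ 0) :
    ContinuousAt (fun v => rotationTo u v x) v₀ :=
  (continuousAt_reflection_orthogonal_singleton _ h).comp (continuousAt_const.add continuousAt_id)

end Rotation

theorem norm_inv_norm_smul_self {E : Type*} [NormedAddCommGroup E] [NormedSpace ℝ E] {x : E}
    (hx : x ≠ 0) : ‖‖x‖⁻¹ • x‖ = 1 := by
  rw [norm_smul, norm_inv, norm_norm, inv_mul_cancel₀ (norm_ne_zero_iff.2 hx)]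

section HyperplaneChart

variable {E F : Type*} [NormedAddCommGroup E] [InnerProductSpace ℝ E]
  [NormedAddCommGroup F] [InnerProductSpace ℝ F] {μ : E}

def hyperplaneChart (J : F ≃ₗᵢ[ℝ] (ℝ ∙ μ)ᗮ) (z : ℝ) (ν : E) (x : F) : E :=
  (z / ‖ν‖ ^ 2) • ν + rotationTo (‖μ‖⁻¹ • μ) (‖ν‖⁻¹ • ν) (J x)

variable (J : F ≃ₗᵢ[ℝ] (ℝ ∙ μ)ᗮ) (z : ℝ)

theorem isometry_hyperplaneChart (ν : E) : Isometry (hyperplaneChart J z ν) :=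
  (isometry_add_left _).comp ((rotationTo _ _).isometry.comp (isometry_subtype_coe.comp J.isometry))

omit [InnerProductSpace ℝ F] in
theorem inner_rotationTo_normalize_eq_zero_iff (hμ : μ ≠ 0) {ν : E} (hν : ν ≠ 0) (t : E) :
    ⟪ν, rotationTo (‖μ‖⁻¹ • μ) (‖ν‖⁻¹ • ν) t⟫ = 0 ↔ ⟪μ, t⟫ = 0 := by
  have key := inner_rotationTo_apply (u := ‖μ‖⁻¹ • μ) (v := ‖ν‖⁻¹ • ν)
    (by rw [norm_inv_norm_smul_self hμ, norm_inv_norm_smul_self hν]) t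
  rw [real_inner_smul_left, real_inner_smul_left] at key
  constructor <;> intro h0 <;> simpa [h0, hμ, hν] using key

omit [InnerProductSpace ℝ F] in
theorem inner_rotationTo_normalize_orthogonal (hμ : μ ≠ 0) {ν : E} (hν : ν ≠ 0)
    (t : (ℝ ∙ μ)ᗮ) : ⟪ν, rotationTo (‖μ‖⁻¹ • μ) (‖ν‖⁻¹ • ν) t⟫ = 0 :=
  (inner_rotationTo_normalize_eq_zero_iff hμ hν t).2
    (Submodule.mem_orthogonal_singleton_iff_inner_right.1 t.2)

theorem inner_hyperplaneChart (hμ : μ ≠ 0) {ν : E} (hν : ν ≠ 0) (x : F) :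
    ⟪ν, hyperplaneChart J z ν x⟫ = z := by
  have : ‖ν‖ ≠ 0 := norm_ne_zero_iff.2 hν
  rw [hyperplaneChart, inner_add_right, inner_rotationTo_normalize_orthogonal hμ hν, add_zero,
    real_inner_smul_right, real_inner_self_eq_norm_sq]
  field_simp

theorem range_hyperplaneChart (hμ : μ ≠ 0) {ν : E} (hν : ν ≠ 0) :
    range (hyperplaneChart J z ν) = {y | ⟪ν, y⟫ = z} := by
  refine Subset.antisymm (range_subset_iff.2 (inner_hyperplaneChart J z hμ hν)) fun y hy => ?_
  set R := rotationTo (‖μ‖⁻¹ • μ) (‖ν‖⁻¹ • ν)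
  set t := R.symm (y - (z / ‖ν‖ ^ 2) • ν)
  have ht : ⟪μ, t⟫ = 0 := by
    refine (inner_rotationTo_normalize_eq_zero_iff hμ hν t).1 ?_
    have : ‖ν‖ ≠ 0 := norm_ne_zero_iff.2 hν
    rw [LinearIsometryEquiv.apply_symm_apply, inner_sub_right, real_inner_smul_right,
      real_inner_self_eq_norm_sq, hy.out]
    field_simp
    ring
  refine ⟨J.symm ⟨t, Submodule.mem_orthogonal_singleton_iff_inner_right.2 ht⟩, ?_⟩
  simp [hyperplaneChart, t, R]

theorem norm_le_norm_hyperplaneChart (hμ : μ ≠ 0) {ν : E} (hν : ν ≠ 0) (x : F) :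
    ‖x‖ ≤ ‖hyperplaneChart J z ν x‖ := by
  have horth : ⟪(z / ‖ν‖ ^ 2) • ν, rotationTo (‖μ‖⁻¹ • μ) (‖ν‖⁻¹ • ν) (J x)⟫ = 0 := by
    rw [real_inner_smul_left, inner_rotationTo_normalize_orthogonal hμ hν, mul_zero]
  refine nonneg_le_nonneg_of_sq_le_sq (norm_nonneg _) ?_
  rw [hyperplaneChart, norm_add_sq_eq_norm_sq_add_norm_sq_real horth,
    LinearIsometryEquiv.norm_map, ← Submodule.coe_norm, LinearIsometryEquiv.norm_map]
  exact le_add_of_nonneg_left (mul_self_nonneg _)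

theorem norm_hyperplaneChart_le (ν : E) (x : F) :
    ‖hyperplaneChart J z ν x‖ ≤ ‖(z / ‖ν‖ ^ 2) • ν‖ + ‖x‖ := by
  simpa [hyperplaneChart, ← Submodule.coe_norm, LinearIsometryEquiv.norm_map] using
    norm_add_le ((z / ‖ν‖ ^ 2) • ν) (rotationTo (‖μ‖⁻¹ • μ) (‖ν‖⁻¹ • ν) (J x))

theorem continuousAt_hyperplaneChart (hμ : μ ≠ 0) (x : F) :
    ContinuousAt (fun ν => hyperplaneChart J z ν x) μ := by
  have hnμ : ‖μ‖ ≠ 0 := norm_ne_zero_iff.2 hμ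
  have hnormalize : ContinuousAt (fun ν : E => ‖ν‖⁻¹ • ν) μ := by fun_prop (disch := assumption)
  have hsum : ‖μ‖⁻¹ • μ + ‖μ‖⁻¹ • μ ≠ 0 := by
    rw [← two_smul ℝ]; exact smul_ne_zero two_ne_zero (by simpa using hμ)
  have hrot : ContinuousAt (fun ν : E => rotationTo (‖μ‖⁻¹ • μ) (‖ν‖⁻¹ • ν) (J x)) μ :=
    (continuousAt_rotationTo_apply _ _ hsum).comp (f := fun ν : E => ‖ν‖⁻¹ • ν) hnormalize
  have : ‖μ‖ ^ 2 ≠ 0 := by positivity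
  have hfoot : ContinuousAt (fun ν : E => (z / ‖ν‖ ^ 2) • ν) μ := by
    fun_prop (disch := assumption)
  exact hfoot.add hrot

theorem exists_norm_hyperplaneChart_le (hμ : μ ≠ 0) (R : ℝ) :
    ∃ K, ∀ᶠ ν in 𝓝 μ, ∀ x ∈ closedBall (0 : F) R, ‖hyperplaneChart J z ν x‖ ≤ K := by
  have hnμ : ‖μ‖ ^ 2 ≠ 0 := by positivity
  have hfoot : ContinuousAt (fun ν : E => ‖(z / ‖ν‖ ^ 2) • ν‖) μ := by
    fun_prop (disch := assumption)
  refine ⟨‖(z / ‖μ‖ ^ 2) • μ‖ + 1 + R, ?_⟩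
  filter_upwards [hfoot.eventually (gt_mem_nhds (lt_add_one _))] with ν hν x hx
  have := norm_hyperplaneChart_le J z ν x
  rw [mem_closedBall_zero_iff] at hx
  linarith

theorem exists_norm_smul_hyperplaneChart_le {h : E → ℝ}
    (hloc : ∀ r, ∃ C, ∀ y, ‖y‖ ≤ r → |h y| ≤ C) (hμ : μ ≠ 0) (R : ℝ) :
    ∃ C, ∀ᶠ ν in 𝓝 μ, ∀ x ∈ closedBall (0 : F) R,
      ‖h (hyperplaneChart J z ν x) • hyperplaneChart J z ν x‖ ≤ C := by
  obtain ⟨K, hK⟩ := exists_norm_hyperplaneChart_le J z hμ R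
  obtain ⟨C, hC⟩ := hloc K
  refine ⟨C * K, hK.mono fun ν hν x hx => ?_⟩
  have hy := hν x hx
  rw [norm_smul, Real.norm_eq_abs]
  exact mul_le_mul (hC _ hy) hy (norm_nonneg _) ((abs_nonneg _).trans (hC _ hy))

end HyperplaneChart

section SmallTails

variable {X α G : Type*} [TopologicalSpace X] [MeasurableSpace α] [NormedAddCommGroup G]
  [NormedSpace ℝ G] {σ : Measure α} {F : X → α → G} {a : X}

theorem continuousAt_integral_of_setIntegral_of_tail_le
    (hF : ∀ᶠ i in 𝓝 a, AEStronglyMeasurable (F i) σ)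
    (h : ∀ ε > 0, ∃ s, MeasurableSet s ∧ ContinuousAt (fun i => ∫ x in s, F i x ∂σ) a ∧
      ∀ᶠ i in 𝓝 a, IntegrableOn (F i) s σ ∧ ∫⁻ x in sᶜ, ‖F i x‖ₑ ∂σ ≤ ENNReal.ofReal ε) :
    ContinuousAt (fun i => ∫ x, F i x ∂σ) a := by
  refine Metric.continuousAt_iff'.2 fun ε hε => ?_
  obtain ⟨s, hs, hcont, htail⟩ := h (ε / 3) (by positivity)
  have hsplit : ∀ᶠ i in 𝓝 a, ∫ x, F i x ∂σ = ∫ x in s, F i x ∂σ + ∫ x in sᶜ, F i x ∂σ ∧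
      ‖∫ x in sᶜ, F i x ∂σ‖ ≤ ε / 3 := by
    filter_upwards [hF, htail] with i hmeas ⟨hint, hle⟩
    have hint' : IntegrableOn (F i) sᶜ σ := ⟨hmeas.restrict, hle.trans_lt ENNReal.ofReal_lt_top⟩
    refine ⟨(integral_add_compl hs ?_).symm, ?_⟩
    · rw [← integrableOn_univ, ← union_compl_self s]
      exact hint.union hint'
    · rw [← ENNReal.ofReal_le_ofReal_iff (by positivity), ofReal_norm]
      exact (enorm_integral_le_lintegral_enorm _).trans hle
  obtain ⟨ha, ha'⟩ := hsplit.self_of_nhds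
  filter_upwards [hsplit, Metric.continuousAt_iff'.1 hcont (ε / 3) (by positivity)]
    with i ⟨hi, hi'⟩ hdist
  rw [dist_eq_norm] at hdist ⊢
  rw [hi, ha, add_sub_add_comm]
  linarith [norm_add_le (∫ x in s, F i x ∂σ - ∫ x in s, F a x ∂σ)
    (∫ x in sᶜ, F i x ∂σ - ∫ x in sᶜ, F a x ∂σ),
    norm_sub_le (∫ x in sᶜ, F i x ∂σ) (∫ x in sᶜ, F a x ∂σ)]

theorem continuousAt_integral_of_bounded_of_tail_le [FirstCountableTopology X]
    (hF : ∀ᶠ i in 𝓝 a, AEStronglyMeasurable (F i) σ)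
    (hcont : ∀ᵐ x ∂σ, ContinuousAt (fun i => F i x) a)
    (h : ∀ ε > 0, ∃ s, MeasurableSet s ∧ σ s ≠ ∞ ∧ (∃ C, ∀ᶠ i in 𝓝 a, ∀ x ∈ s, ‖F i x‖ ≤ C) ∧
      ∀ᶠ i in 𝓝 a, ∫⁻ x in sᶜ, ‖F i x‖ₑ ∂σ ≤ ENNReal.ofReal ε) :
    ContinuousAt (fun i => ∫ x, F i x ∂σ) a := by
  refine continuousAt_integral_of_setIntegral_of_tail_le hF fun ε hε => ?_
  obtain ⟨s, hs, hσs, ⟨C, hC⟩, htail⟩ := h ε hε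
  have hbound : ∀ᶠ i in 𝓝 a, ∀ᵐ x ∂σ.restrict s, ‖F i x‖ ≤ C :=
    hC.mono fun i hi => (ae_restrict_iff' hs).2 (ae_of_all _ hi)
  have : IsFiniteMeasure (σ.restrict s) := isFiniteMeasure_restrict.2 hσs
  refine ⟨s, hs, continuousAt_of_dominated (hF.mono fun i hi => hi.restrict) hbound
    (integrable_const C) (ae_restrict_of_ae hcont), ?_⟩
  filter_upwards [hF, hbound, htail] with i hmeas hb hle
  exact ⟨Measure.integrableOn_of_bounded hσs hmeas hb, hle⟩

end SmallTails

theorem setLIntegral_compl_closedBall_le_map {E F : Type*} [SeminormedAddCommGroup F]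
    [MeasurableSpace F] [Norm E] [MeasurableSpace E] {σ : Measure F} {Φ : F → E}
    (hΦ : MeasurableEmbedding Φ) (hnorm : ∀ x, ‖x‖ ≤ ‖Φ x‖) (g : E → ℝ≥0∞) (R : ℝ) :
    ∫⁻ x in (closedBall 0 R)ᶜ, g (Φ x) ∂σ ≤ ∫⁻ y in {y | R ≤ ‖y‖}, g y ∂σ.map Φ := by
  rw [hΦ.restrict_map, hΦ.lintegral_map]
  refine lintegral_mono_set fun x hx => ?_
  rw [mem_compl_iff, mem_closedBall_zero_iff, not_le] at hx
  exact hx.le.trans (hnorm x)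

section Euclidean

variable {n : ℕ} {μ : EuclideanSpace ℝ (Fin (n + 1))}
  (J : EuclideanSpace ℝ (Fin n) ≃ₗᵢ[ℝ] (ℝ ∙ μ)ᗮ) (z : ℝ)

theorem measurableEmbedding_hyperplaneChart (ν : EuclideanSpace ℝ (Fin (n + 1))) :
    MeasurableEmbedding (hyperplaneChart J z ν) :=
  (isometry_hyperplaneChart J z ν).isClosedEmbedding.measurableEmbedding

theorem hypMeasure_eq_map_hyperplaneChart (hμ : μ ≠ 0) {ν : EuclideanSpace ℝ (Fin (n + 1))}
    (hν : ν ≠ 0) : hypMeasure ν z = (μH[n]).map (hyperplaneChart J z ν) := by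
  rw [(isometry_hyperplaneChart J z ν).map_hausdorffMeasure (Or.inl (Nat.cast_nonneg n)),
    range_hyperplaneChart J z hμ hν, hypMeasure]
  push_cast
  ring_nf

theorem ae_continuousAt_smul_hyperplaneChart {h : EuclideanSpace ℝ (Fin (n + 1)) → ℝ}
    (hμ : μ ≠ 0) (hcont : ∀ᵐ y ∂hypMeasure μ z, ContinuousAt h y) :
    ∀ᵐ x ∂μH[n], ContinuousAt
      (fun ν => h (hyperplaneChart J z ν x) • hyperplaneChart J z ν x) μ := by
  rw [hypMeasure_eq_map_hyperplaneChart J z hμ hμ,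
    (measurableEmbedding_hyperplaneChart J z μ).ae_map_iff] at hcont
  filter_upwards [hcont] with x hx
  have hchart := continuousAt_hyperplaneChart J z hμ x
  exact (hx.comp (f := (hyperplaneChart J z · x)) hchart).smul hchart

theorem setLIntegral_compl_closedBall_le_hypMeasure (h : EuclideanSpace ℝ (Fin (n + 1)) → ℝ)
    (hμ : μ ≠ 0) {ν : EuclideanSpace ℝ (Fin (n + 1))} (hν : ν ≠ 0) (R : ℝ) :
    ∫⁻ x in (closedBall 0 R)ᶜ, ‖h (hyperplaneChart J z ν x) • hyperplaneChart J z ν x‖ₑ ∂μH[n]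
      ≤ ∫⁻ y in {y | R ≤ ‖y‖}, ENNReal.ofReal (‖y‖ * |h y|) ∂hypMeasure ν z := by
  have hnorm (y : EuclideanSpace ℝ (Fin (n + 1))) : ‖h y • y‖ₑ = ENNReal.ofReal (‖y‖ * |h y|) := by
    rw [← ofReal_norm, norm_smul, Real.norm_eq_abs, mul_comm]
  simp_rw [hnorm, hypMeasure_eq_map_hyperplaneChart J z hμ hν]
  exact setLIntegral_compl_closedBall_le_map (measurableEmbedding_hyperplaneChart J z ν)
    (norm_le_norm_hyperplaneChart J z hμ hν) _ R

end Euclidean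

theorem continuousWithinAt_hyperplane_vector_integral_general
    {d : ℕ} (z : ℝ) (h : EuclideanSpace ℝ (Fin d) → ℝ)
    (hmeas : Measurable h)
    (hloc : ∀ r : ℝ, ∃ C : ℝ, ∀ y, ‖y‖ ≤ r → |h y| ≤ C)
    (μ : EuclideanSpace ℝ (Fin d)) (hμ : μ ≠ 0)
    (hcont : ∀ᵐ y ∂(hypMeasure μ z), ContinuousAt h y)
    (hunif : ∃ ε > 0, Tendsto (fun M : ℝ =>
        ⨆ ν ∈ closedBall μ ε,
          ∫⁻ y in {y : EuclideanSpace ℝ (Fin d) | M ≤ ‖y‖},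
            ENNReal.ofReal (‖y‖ * |h y|) ∂(hypMeasure ν z))
      atTop (𝓝 0)) :
    ContinuousWithinAt
      (fun ν : EuclideanSpace ℝ (Fin d) => ‖ν‖⁻¹ • ∫ y, h y • y ∂(hypMeasure ν z))
      {ν : EuclideanSpace ℝ (Fin d) | ν ≠ 0} μ := by
  rcases d with _ | n
  · exact absurd (Subsingleton.elim μ 0) hμ
  obtain ⟨ε₀, hε₀, htail⟩ := hunif
  have : Fact (Module.finrank ℝ (EuclideanSpace ℝ (Fin (n + 1))) = n + 1) :=
    ⟨finrank_euclideanSpace_fin⟩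
  set J := (OrthonormalBasis.fromOrthogonalSpanSingleton (𝕜 := ℝ) n hμ).repr.symm
  have hnear : ∀ᶠ ν in 𝓝 μ, ν ∈ closedBall μ ε₀ ∧ ν ≠ 0 :=
    Eventually.and (closedBall_mem_nhds μ hε₀) (eventually_ne_nhds hμ)
  have hint : ContinuousAt (fun ν =>
      ∫ x, h (hyperplaneChart J z ν x) • hyperplaneChart J z ν x ∂μH[n]) μ := by
    refine continuousAt_integral_of_bounded_of_tail_le (Eventually.of_forall fun ν =>
      ((hmeas.smul measurable_id).comp (isometry_hyperplaneChart J z ν).continuous.measurable)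
        |>.aestronglyMeasurable) (ae_continuousAt_smul_hyperplaneChart J z hμ hcont)
      fun ε hε => ?_
    obtain ⟨R, hR⟩ := (htail.eventually (ge_mem_nhds (ENNReal.ofReal_pos.2 hε))).exists
    refine ⟨closedBall 0 R, measurableSet_closedBall, measure_closedBall_lt_top.ne,
      exists_norm_smul_hyperplaneChart_le J z hloc hμ R, ?_⟩
    filter_upwards [hnear] with ν hν
    exact (setLIntegral_compl_closedBall_le_hypMeasure J z h hμ hν.2 R).trans
      ((le_biSup _ hν.1).trans hR)
  refine (((continuous_norm.continuousAt.inv₀ (norm_ne_zero_iff.2 hμ)).fun_smul hint).congr ?_)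
    |>.continuousWithinAt
  filter_upwards [hnear] with ν hν
  rw [hypMeasure_eq_map_hyperplaneChart J z hμ hν.2,
    (measurableEmbedding_hyperplaneChart J z ν).integral_map]
  rfl

/-- Continuity of `γ(h, ·) : ν ↦ ∫ (y/|ν|) h(y) dλ_z^ν(y)` at `μ` (proof of
Proposition 4.1 in Etoré–Fort–Jourdain–Moulines, "On adaptive stratification"). -/
theorem continuousWithinAt_hyperplane_vector_integral
    {d : ℕ} (z : ℝ) (h : EuclideanSpace ℝ (Fin d) → ℝ)
    (hmeas : Measurable h) (hint : Integrable h volume)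
    (hloc : ∀ r : ℝ, ∃ C : ℝ, ∀ y, ‖y‖ ≤ r → |h y| ≤ C)
    (μ : EuclideanSpace ℝ (Fin d)) (hμ : μ ≠ 0)
    (hcont : ∀ᵐ y ∂(hypMeasure μ z), ContinuousAt h y)
    (hunif : ∃ ε > 0, Tendsto (fun M : ℝ =>
        ⨆ ν ∈ closedBall μ ε,
          ∫⁻ y in {y : EuclideanSpace ℝ (Fin d) | M ≤ ‖y‖},
            ENNReal.ofReal (‖y‖ * |h y|) ∂(hypMeasure ν z))
      atTop (𝓝 0)) :
    ContinuousWithinAt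
      (fun ν : EuclideanSpace ℝ (Fin d) => ‖ν‖⁻¹ • ∫ y, h y • y ∂(hypMeasure ν z))
      {ν : EuclideanSpace ℝ (Fin d) | ν ≠ 0} μ :=
  continuousWithinAt_hyperplane_vector_integral_general z h hmeas hloc μ hμ hcont hunif

end
end
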